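/- arXiv:2604.22637 — 9 statements merged into one kernel-verified Lean document; each statement's English description precedes it below -/
import Mathlib

section
/- Let 0 < p ≤ 1. Define μ_0 = δ_1 (the Dirac measure at 1) and recursively μ_n = (μ_{n−1}).bind(κ_p) for n ≥ 1, i.e., μ_n(B) = ∫ κ_p(y)(B) dμ_{n−1}(y). Then for every positive integer n and every x with 0 < x < 1, μ_n((−∞, x]) = 1 − (1 − p·x)^n. -/
open MeasureTheory

/-- The uniform probability distribution on the interval `(0, y)`. -/
noncomputable def unifIoo (y : ℝ) : Measure ℝ :=
  (ENNReal.ofReal y)⁻¹ • (volume.restrict (Set.Ioo 0 y))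

/-- The one-step transition measure of the discrete-time Poisson hyperbolic staircase:
the mixture `(p·y)·Unif(0,y) + (1 − p·y)·δ_y`. -/
noncomputable def kappa (p y : ℝ) : Measure ℝ :=
  ENNReal.ofReal (p * y) • unifIoo y + ENNReal.ofReal (1 - p * y) • Measure.dirac y

/-! The tail `μₙ (x, ∞)` of the staircase, `0 ≤ x < 1`, is multiplied by `1 - p x` at each
step: from `y ≤ x` the kernel stays in `(0, y]`, while from `y > x` it lands in `(x, ∞)` with
probability `p (y - x) + (1 - p y) = 1 - p x`, whatever `y` is. Along the way every `μₙ` is a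
probability measure on `(0, 1]`, where `κ_p` is a probability kernel because `p y ≤ 1`. -/

open Set

lemma unifIoo_apply (y : ℝ) (s : Set ℝ) :
    unifIoo y s = (ENNReal.ofReal y)⁻¹ * volume (s ∩ Ioo 0 y) := by
  simp [unifIoo, Measure.restrict_apply' measurableSet_Ioo]

lemma ofReal_mul_unifIoo_apply {p y : ℝ} (hp : 0 ≤ p) (hy : 0 < y) (s : Set ℝ) :
    ENNReal.ofReal (p * y) * unifIoo y s = ENNReal.ofReal p * volume (s ∩ Ioo 0 y) := by
  rw [unifIoo_apply, ← mul_assoc, ENNReal.ofReal_mul hp, mul_assoc (ENNReal.ofReal p),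
    ENNReal.mul_inv_cancel (by simpa using hy) ENNReal.ofReal_ne_top, mul_one]

lemma measurable_unifIoo : Measurable unifIoo := by
  refine Measure.measurable_of_measurable_coe _ fun s _ => ?_
  simp_rw [unifIoo_apply]
  have hmono : Monotone fun y : ℝ => volume (s ∩ Ioo 0 y) := fun _ _ hab =>
    measure_mono (inter_subset_inter_right _ (Ioo_subset_Ioo_right hab))
  exact ENNReal.measurable_ofReal.inv.mul hmono.measurable

lemma kappa_apply (p y : ℝ) (s : Set ℝ) :
    kappa p y s = ENNReal.ofReal (p * y) * unifIoo y s
      + ENNReal.ofReal (1 - p * y) * Measure.dirac y s := by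
  simp [kappa]

lemma measurable_kappa (p : ℝ) : Measurable (kappa p) := by
  refine Measure.measurable_of_measurable_coe _ fun s hs => ?_
  simp_rw [kappa_apply]
  have hunif := (Measure.measurable_coe hs).comp measurable_unifIoo
  have hdirac := (Measure.measurable_coe hs).comp (Measure.measurable_dirac (α := ℝ))
  fun_prop

variable {p x y : ℝ}

lemma kappa_compl_Ioc (hy : 0 < y) : kappa p y (Ioc 0 y)ᶜ = 0 := by
  have hunif : (Ioc 0 y)ᶜ ∩ Ioo 0 y = ∅ :=
    (disjoint_compl_left.mono_right Ioo_subset_Ioc_self).inter_eq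
  rw [kappa_apply, unifIoo_apply, hunif, Measure.dirac_apply,
    indicator_of_notMem (show y ∉ (Ioc 0 y)ᶜ from fun h => h ⟨hy, le_rfl⟩)]
  simp

lemma ae_mem_Ioc_kappa (hy : 0 < y) : ∀ᵐ z ∂kappa p y, z ∈ Ioc 0 y :=
  measure_eq_zero_iff_ae_notMem.mp (kappa_compl_Ioc hy) |>.mono fun _ h => not_not.mp h

lemma isProbabilityMeasure_kappa (hp : 0 ≤ p) (hy : 0 < y) (hpy : p * y ≤ 1) :
    IsProbabilityMeasure (kappa p y) := by
  constructor
  rw [kappa_apply, ofReal_mul_unifIoo_apply hp hy, univ_inter, Real.volume_Ioo, sub_zero,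
    Measure.dirac_apply_of_mem (mem_univ y), mul_one, ← ENNReal.ofReal_mul hp,
    ← ENNReal.ofReal_add (by positivity) (by linarith)]
  simp

lemma kappa_Ioi_of_le (hy : 0 < y) (hyx : y ≤ x) : kappa p y (Ioi x) = 0 :=
  measure_mono_null (fun _ (hz : x < _) (hz' : _ ∈ Ioc 0 y) => (hz'.2.trans hyx).not_gt hz)
    (kappa_compl_Ioc hy)

lemma kappa_Ioi_of_lt (hp : 0 ≤ p) (hx : 0 ≤ x) (hxy : x < y) (hpy : p * y ≤ 1) :
    kappa p y (Ioi x) = ENNReal.ofReal (1 - p * x) := by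
  have hIoo : Ioi x ∩ Ioo 0 y = Ioo x y := by
    rw [Ioi_inter_Ioo, max_eq_left hx]
  rw [kappa_apply, ofReal_mul_unifIoo_apply hp (hx.trans_lt hxy), hIoo, Real.volume_Ioo,
    Measure.dirac_apply_of_mem (show y ∈ Ioi x from hxy), mul_one, ← ENNReal.ofReal_mul hp,
    ← ENNReal.ofReal_add (mul_nonneg hp (by linarith)) (by linarith)]
  ring_nf

section bind

variable {ν : Measure ℝ}

lemma ae_mem_Ioc_bind_kappa (hν : ∀ᵐ y ∂ν, y ∈ Ioc 0 1) :
    ∀ᵐ z ∂ν.bind (kappa p), z ∈ Ioc 0 1 := by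
  refine Measure.ae_comp_of_ae_ae (κ := ⟨kappa p, measurable_kappa p⟩) measurableSet_Ioc ?_
  filter_upwards [hν] with y hy
  filter_upwards [ae_mem_Ioc_kappa hy.1] with z hz
  exact ⟨hz.1, hz.2.trans hy.2⟩

lemma isProbabilityMeasure_bind_kappa [IsProbabilityMeasure ν] (hp : 0 ≤ p) (hp1 : p ≤ 1)
    (hν : ∀ᵐ y ∂ν, y ∈ Ioc 0 1) : IsProbabilityMeasure (ν.bind (kappa p)) := by
  refine isProbabilityMeasure_bind (measurable_kappa p).aemeasurable ?_
  filter_upwards [hν] with y hy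
  exact isProbabilityMeasure_kappa hp hy.1 (by nlinarith [hy.1, hy.2])

lemma bind_kappa_Ioi (hp : 0 ≤ p) (hp1 : p ≤ 1) (hx : 0 ≤ x)
    (hν : ∀ᵐ y ∂ν, y ∈ Ioc 0 1) :
    ν.bind (kappa p) (Ioi x) = ENNReal.ofReal (1 - p * x) * ν (Ioi x) := by
  rw [Measure.bind_apply measurableSet_Ioi (measurable_kappa p).aemeasurable,
    ← lintegral_indicator_const measurableSet_Ioi]
  refine lintegral_congr_ae ?_
  filter_upwards [hν] with y hy
  rcases le_or_gt y x with hyx | hxy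
  · rw [kappa_Ioi_of_le hy.1 hyx, indicator_of_notMem (notMem_Ioi.mpr hyx)]
  · rw [kappa_Ioi_of_lt hp hx hxy (by nlinarith [hy.1, hy.2]),
      indicator_of_mem (mem_Ioi.mpr hxy)]

end bind

section staircase

variable {μ : ℕ → Measure ℝ} (hp : 0 ≤ p) (hp1 : p ≤ 1) (hμ0 : μ 0 = Measure.dirac 1)
  (hμ : ∀ n : ℕ, μ (n + 1) = (μ n).bind (kappa p))
include hp hp1 hμ0 hμ

lemma staircase_isProbabilityMeasure_ae_mem_Ioc (n : ℕ) :
    IsProbabilityMeasure (μ n) ∧ ∀ᵐ y ∂μ n, y ∈ Ioc 0 1 := by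
  induction n with
  | zero =>
    rw [hμ0]
    exact ⟨inferInstance, ae_dirac_iff measurableSet_Ioc |>.mpr ⟨one_pos, le_rfl⟩⟩
  | succ n ih =>
    obtain ⟨_, hsupp⟩ := ih
    rw [hμ]
    exact ⟨isProbabilityMeasure_bind_kappa hp hp1 hsupp, ae_mem_Ioc_bind_kappa hsupp⟩

lemma staircase_Ioi (hx : 0 ≤ x) (hx1 : x < 1) (n : ℕ) :
    μ n (Ioi x) = ENNReal.ofReal ((1 - p * x) ^ n) := by
  induction n with
  | zero => simp [hμ0, hx1]
  | succ n ih =>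
    have hsupp := (staircase_isProbabilityMeasure_ae_mem_Ioc hp hp1 hμ0 hμ n).2
    rw [hμ, bind_kappa_Ioi hp hp1 hx hsupp, ih, pow_succ', ENNReal.ofReal_mul (by nlinarith)]

end staircase

theorem stmt1 (p : ℝ) (hp : 0 < p) (hp1 : p ≤ 1)
    (μ : ℕ → Measure ℝ) (hμ0 : μ 0 = Measure.dirac 1)
    (hμ : ∀ n : ℕ, μ (n + 1) = (μ n).bind (kappa p)) :
    ∀ n : ℕ, 1 ≤ n → ∀ x : ℝ, 0 < x → x < 1 →
      μ n (Set.Iic x) = ENNReal.ofReal (1 - (1 - p * x) ^ n) := by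
  intro n _ x hx0 hx1
  have : IsProbabilityMeasure (μ n) :=
    (staircase_isProbabilityMeasure_ae_mem_Ioc hp.le hp1 hμ0 hμ n).1
  have hq : 0 ≤ 1 - p * x := by nlinarith
  rw [← compl_Ioi, prob_compl_eq_one_sub measurableSet_Ioi,
    staircase_Ioi hp.le hp1 hμ0 hμ hx0.le hx1, ENNReal.ofReal_sub _ (pow_nonneg hq n),
    ENNReal.ofReal_one]
end

section
/- Let 0 < p ≤ 1, let (Ω, 𝓕, P) be a probability space, let (X_n)_{n≥0} be a sequence of real random variables with X_0 = 1 almost surely and X_n ∈ (0,1] almost surely for all n, and let 𝓕_n = σ(X_0, X_1, …, X_n) be the natural filtration. Assume that for every n ≥ 1 and every x ∈ [0,1), the conditional expectation satisfies E[1_{X_n > x} | 𝓕_{n−1}] = (1 − p·x)·1_{X_{n−1} > x} almost surely. Then for every positive integer n and all x_1, …, x_n ∈ [0,1), P(X_1 > x_1 and X_2 > x_2 and … and X_n > x_n) = ∏_{i=1}^{n} (1 − p·max(x_{n−i+1}, x_{n−i+2}, …, x_n)). -/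
/-!
Conditioning on `𝓕ₙ`, the event `{Xᵢ > xᵢ for i ≤ n + 1}` is `{Xₙ₊₁ > xₙ₊₁} ∩ Bₙ` with `Bₙ`
`𝓕ₙ`-measurable, so its probability is `(1 - p xₙ₊₁) P({Xₙ > xₙ₊₁} ∩ Bₙ)`: the last threshold
is passed back to time `n`, where it merges with `xₙ` into `max xₙ xₙ₊₁`. Iterating, the factor
contributed at time `i` is `1 - p · max(xᵢ, …, xₙ)`; at time `0` the remaining event is sure
because `X₀ = 1`.
-/

open MeasureTheory

-- The nonnegative value is needed: indices outside `s` contribute `sSup ∅ = 0` to the supremum.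
theorem Real.biSup_finset_lt_iff {ι : Type*} {s : Finset ι} {f : ι → ℝ}
    (hf : ∃ j ∈ s, 0 ≤ f j) {a : ℝ} : ⨆ j ∈ s, f j < a ↔ ∀ j ∈ s, f j < a := by
  simpa using s.finite_toSet.ciSup_lt_iff (f := f) (by simpa using hf)

theorem Real.biSup_Icc_add_one_right {x : ℕ → ℝ} (hx : ∀ j, 0 ≤ x j) {i n : ℕ} (hin : i ≤ n) :
    ⨆ j ∈ Finset.Icc i (n + 1), x j = max (⨆ j ∈ Finset.Icc i n, x j) (x (n + 1)) := by
  refine eq_of_forall_gt_iff fun a => ?_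
  rw [Real.biSup_finset_lt_iff ⟨i, Finset.mem_Icc.mpr ⟨le_rfl, by omega⟩, hx i⟩, max_lt_iff,
    Real.biSup_finset_lt_iff ⟨i, by simp [hin], hx i⟩,
    ← Finset.insert_Icc_right_eq_Icc_add_one (by omega), Finset.forall_mem_insert, and_comm]

theorem Real.biSup_Icc_self {x : ℕ → ℝ} (hx : ∀ j, 0 ≤ x j) (n : ℕ) :
    ⨆ j ∈ Finset.Icc n n, x j = x n :=
  eq_of_forall_gt_iff fun a => by
    rw [Real.biSup_finset_lt_iff ⟨n, by simp, hx n⟩, Finset.Icc_self]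
    simp

theorem measureReal_inter_eq_mul_of_condExp_indicator {Ω : Type*} {m m0 : MeasurableSpace Ω}
    {P : Measure Ω} [IsFiniteMeasure P] (hm : m ≤ m0) {A A' B : Set Ω}
    (hA : MeasurableSet A) (hA' : MeasurableSet A') (hB : MeasurableSet[m] B) {c : ℝ}
    (h : P[A.indicator 1 | m] =ᵐ[P] fun ω => c * A'.indicator 1 ω) :
    P.real (A ∩ B) = c * P.real (A' ∩ B) := by
  calc P.real (A ∩ B) = ∫ ω in B, A.indicator 1 ω ∂P := by
        rw [integral_indicator_one hA, measureReal_restrict_apply hA]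
    _ = ∫ ω in B, (P[A.indicator 1 | m]) ω ∂P :=
        (setIntegral_condExp hm ((integrable_const 1).indicator hA) hB).symm
    _ = ∫ ω in B, c * A'.indicator 1 ω ∂P := integral_congr_ae (ae_restrict_of_ae h)
    _ = c * P.real (A' ∩ B) := by
        rw [integral_const_mul, integral_indicator_one hA', measureReal_restrict_apply hA']

section Staircase

variable {Ω : Type*} {m0 : MeasurableSpace Ω}

def exceedanceEvent (X : ℕ → Ω → ℝ) (x : ℕ → ℝ) (n : ℕ) : Set Ω :=
  {ω | ∀ i ∈ Finset.Icc 1 n, x i < X i ω}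

theorem exceedanceEvent_zero (X : ℕ → Ω → ℝ) (x : ℕ → ℝ) : exceedanceEvent X x 0 = Set.univ := by
  simp [exceedanceEvent]

theorem exceedanceEvent_succ_inter (X : ℕ → Ω → ℝ) (x : ℕ → ℝ) (y : ℝ) (n : ℕ) :
    exceedanceEvent X x (n + 1) ∩ {ω | y < X (n + 1) ω} =
      {ω | max y (x (n + 1)) < X (n + 1) ω} ∩ exceedanceEvent X x n := by
  ext ω
  simp only [exceedanceEvent, ← Finset.insert_Icc_right_eq_Icc_add_one (Nat.le_add_left 1 n),
    Finset.forall_mem_insert, Set.mem_inter_iff, Set.mem_ofPred_eq, max_lt_iff]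
  tauto

theorem exceedanceEvent_subset_setOf_pos {X : ℕ → Ω → ℝ} {x : ℕ → ℝ} (hx : ∀ i, 0 ≤ x i)
    {n : ℕ} (hn : 1 ≤ n) : exceedanceEvent X x n ⊆ {ω | 0 < X n ω} :=
  fun _ hω => (hx n).trans_lt (hω n (Finset.mem_Icc.mpr ⟨hn, le_rfl⟩))

theorem measurableSet_exceedanceEvent {ℱ : Filtration ℕ m0} {X : ℕ → Ω → ℝ} (hX : Adapted ℱ X)
    (x : ℕ → ℝ) (n : ℕ) : MeasurableSet[ℱ n] (exceedanceEvent X x n) := by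
  have : exceedanceEvent X x n = ⋂ i ∈ Finset.Icc 1 n, X i ⁻¹' Set.Ioi (x i) := by
    ext; simp [exceedanceEvent]
  rw [this]
  exact Finset.measurableSet_biInter _ fun i hi =>
    (hX i).mono (ℱ.mono (Finset.mem_Icc.mp hi).2) le_rfl measurableSet_Ioi

/-- The threshold `y` at the last time is the maximum of the later thresholds passed back so far. -/
theorem measureReal_exceedanceEvent_inter {P : Measure Ω} [IsProbabilityMeasure P]
    {ℱ : Filtration ℕ m0} {X : ℕ → Ω → ℝ} (hX : Adapted ℱ X) (hX0 : ∀ᵐ ω ∂P, X 0 ω = 1) {p : ℝ}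
    (hcond : ∀ n, ∀ y ∈ Set.Ico (0 : ℝ) 1,
      P[{ω | y < X (n + 1) ω}.indicator 1 | ℱ n] =ᵐ[P]
        fun ω => (1 - p * y) * {ω | y < X n ω}.indicator 1 ω)
    {x : ℕ → ℝ} (hx : ∀ i, x i ∈ Set.Ico (0 : ℝ) 1) (n : ℕ) :
    ∀ y ∈ Set.Ico (0 : ℝ) 1, P.real (exceedanceEvent X x n ∩ {ω | y < X n ω}) =
      ∏ i ∈ Finset.Icc 1 n, (1 - p * max y (⨆ j ∈ Finset.Icc i n, x j)) := by
  have hx0 : ∀ i, 0 ≤ x i := fun i => (hx i).1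
  induction n with
  | zero =>
    intro y hy
    have hsure : {ω | y < X 0 ω} =ᵐ[P] Set.univ := by
      refine Filter.eventuallyEq_set.mpr ?_
      filter_upwards [hX0] with ω hω
      simp [hω, hy.2]
    rw [exceedanceEvent_zero, Set.univ_inter, measureReal_congr hsure, probReal_univ]
    simp
  | succ n ih =>
    intro y hy
    set z := max y (x (n + 1))
    have hz : z ∈ Set.Ico (0 : ℝ) 1 := ⟨le_max_of_le_left hy.1, max_lt hy.2 (hx (n + 1)).2⟩
    calc P.real (exceedanceEvent X x (n + 1) ∩ {ω | y < X (n + 1) ω})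
        = P.real ({ω | z < X (n + 1) ω} ∩ exceedanceEvent X x n) := by
          rw [exceedanceEvent_succ_inter]
      _ = (1 - p * z) * P.real ({ω | z < X n ω} ∩ exceedanceEvent X x n) :=
          measureReal_inter_eq_mul_of_condExp_indicator (ℱ.le n)
            (measurableSet_lt measurable_const ((hX (n + 1)).mono (ℱ.le _) le_rfl))
            (measurableSet_lt measurable_const ((hX n).mono (ℱ.le _) le_rfl))
            (measurableSet_exceedanceEvent hX x n) (hcond n z hz)
      _ = (1 - p * z) * ∏ i ∈ Finset.Icc 1 n, (1 - p * max z (⨆ j ∈ Finset.Icc i n, x j)) := by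
          rw [Set.inter_comm, ih z hz]
      _ = ∏ i ∈ Finset.Icc 1 (n + 1), (1 - p * max y (⨆ j ∈ Finset.Icc i (n + 1), x j)) := by
          rw [Finset.prod_Icc_succ_top (by omega), Real.biSup_Icc_self hx0, mul_comm]
          congr 1
          refine Finset.prod_congr rfl fun i hi => ?_
          rw [Real.biSup_Icc_add_one_right hx0 (Finset.mem_Icc.mp hi).2, max_comm _ (x (n + 1)),
            ← max_assoc]

end Staircase

theorem stmt3_general {Ω : Type*} [m0 : MeasurableSpace Ω] (P : Measure Ω) [IsProbabilityMeasure P]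
    (p : ℝ)
    (X : ℕ → Ω → ℝ) (hXmeas : ∀ n, Measurable (X n))
    (hX0 : ∀ᵐ ω ∂P, X 0 ω = 1)
    (F : ℕ → MeasurableSpace Ω)
    (hF : ∀ n, F n = ⨆ i ≤ n, MeasurableSpace.comap (X i) Real.measurableSpace)
    (hcond : ∀ n : ℕ, 1 ≤ n → ∀ x ∈ Set.Ico (0 : ℝ) 1,
      P[Set.indicator {ω | x < X n ω} (fun _ => (1 : ℝ)) | F (n - 1)] =ᵐ[P]
        fun ω => (1 - p * x) * Set.indicator {ω' | x < X (n - 1) ω'} (fun _ => (1 : ℝ)) ω) :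
    ∀ n : ℕ, 1 ≤ n → ∀ x : ℕ → ℝ, (∀ i, x i ∈ Set.Ico (0 : ℝ) 1) →
      P {ω | ∀ i ∈ Finset.Icc 1 n, x i < X i ω} =
        ENNReal.ofReal (∏ i ∈ Finset.Icc 1 n, (1 - p * ⨆ j ∈ Finset.Icc i n, x j)) := by
  intro n hn x hx
  let ℱ := Filtration.natural X fun n => (hXmeas n).stronglyMeasurable
  have hcond_natural : ∀ n, ∀ y ∈ Set.Ico (0 : ℝ) 1,
      P[{ω | y < X (n + 1) ω}.indicator 1 | ℱ n] =ᵐ[P]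
        fun ω => (1 - p * y) * {ω | y < X n ω}.indicator 1 ω := fun n y hy => by
    have h := hcond (n + 1) (Nat.le_add_left 1 n) y hy
    rw [Nat.add_sub_cancel, hF] at h
    exact h
  have hprob := measureReal_exceedanceEvent_inter (Filtration.stronglyAdapted_natural _).adapted
    hX0 hcond_natural hx n 0 ⟨le_rfl, one_pos⟩
  rw [Set.inter_eq_left.mpr (exceedanceEvent_subset_setOf_pos (fun i => (hx i).1) hn)] at hprob
  have hsup : ∀ i, max 0 (⨆ j ∈ Finset.Icc i n, x j) = ⨆ j ∈ Finset.Icc i n, x j := fun i =>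
    max_eq_right (Real.iSup_nonneg fun j => Real.iSup_nonneg fun _ => (hx j).1)
  rw [← ofReal_measureReal]
  simp only [hsup] at hprob
  exact congrArg ENNReal.ofReal hprob

theorem stmt3 {Ω : Type*} [m0 : MeasurableSpace Ω] (P : Measure Ω) [IsProbabilityMeasure P]
    (p : ℝ) (hp : 0 < p) (hp1 : p ≤ 1)
    (X : ℕ → Ω → ℝ) (hXmeas : ∀ n, Measurable (X n))
    (hX0 : ∀ᵐ ω ∂P, X 0 ω = 1)
    (hXmem : ∀ n, ∀ᵐ ω ∂P, X n ω ∈ Set.Ioc (0 : ℝ) 1)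
    (F : ℕ → MeasurableSpace Ω)
    (hF : ∀ n, F n = ⨆ i ≤ n, MeasurableSpace.comap (X i) Real.measurableSpace)
    (hcond : ∀ n : ℕ, 1 ≤ n → ∀ x ∈ Set.Ico (0 : ℝ) 1,
      P[Set.indicator {ω | x < X n ω} (fun _ => (1 : ℝ)) | F (n - 1)] =ᵐ[P]
        fun ω => (1 - p * x) * Set.indicator {ω' | x < X (n - 1) ω'} (fun _ => (1 : ℝ)) ω) :
    ∀ n : ℕ, 1 ≤ n → ∀ x : ℕ → ℝ, (∀ i, x i ∈ Set.Ico (0 : ℝ) 1) →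
      P {ω | ∀ i ∈ Finset.Icc 1 n, x i < X i ω} =
        ENNReal.ofReal (∏ i ∈ Finset.Icc 1 n, (1 - p * ⨆ j ∈ Finset.Icc i n, x j)) :=
  stmt3_general (m0 := m0) P p X hXmeas hX0 F hF hcond
end

section
/- Let 0 < p ≤ 1 and z ∈ ℝ. Let G : ℕ → ℝ → ℝ satisfy G_0(x) = 1 for all x ∈ [0,1], and for every n ≥ 1 and x ∈ [0,1], G_n(x) = p·z·∫_0^x G_{n−1}(u) du + (1 − p·x)·G_{n−1}(x). Then for every n ≥ 0 and x ∈ [0,1], G_n(x) = Σ_{k=0}^{n} C(n,k) · binom(z−1, k) · p^k · x^k, where C(n,k) is the usual binomial coefficient and binom(z−1, k) = (1/k!)·∏_{i=0}^{k−1} (z − 1 − i) is the generalized binomial coefficient. -/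
/-!
Writing `G_n(x) = ∑ₖ C(n,k) aₖ xᵏ` with `aₖ = binom(z-1,k) pᵏ`, the recurrence becomes an identity
between coefficients. Pascal's rule splits `C(n+1,k+1)` into `C(n,k+1) + C(n,k)`, and the second part is
produced by `p z ∫₀ˣ uᵏ du - p x · xᵏ = p (z - 1 - k) x^{k+1} / (k+1)`, where `p (z - 1 - k) / (k+1)` is
exactly the ratio `a_{k+1} / aₖ`.
-/

open intervalIntegral Finset

open scoped Nat

lemma prod_sub_div_factorial_succ_mul {K : Type*} [Field K] [CharZero K] (w : K) (k : ℕ) :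
    (∏ i ∈ range (k + 1), (w - i)) / (k + 1)! * (k + 1)
      = (∏ i ∈ range k, (w - i)) / k ! * (w - k) := by
  rw [prod_range_succ, Nat.factorial_succ]
  push_cast
  field_simp

lemma integral_sum_choose_mul_pow (a : ℕ → ℝ) (n : ℕ) (x : ℝ) :
    ∫ u in (0 : ℝ)..x, ∑ k ∈ range (n + 1), (n.choose k : ℝ) * a k * u ^ k
      = ∑ k ∈ range (n + 1), (n.choose k : ℝ) * a k * (x ^ (k + 1) / (k + 1)) := by
  rw [integral_finsetSum fun k _ => (intervalIntegrable_pow k).const_mul _]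
  refine sum_congr rfl fun k _ => ?_
  rw [integral_const_mul, integral_pow]
  norm_num

lemma sum_choose_succ_mul_pow_eq {p z : ℝ} {a : ℕ → ℝ}
    (ha : ∀ k : ℕ, a (k + 1) * (k + 1) = p * (z - 1 - k) * a k) (n : ℕ) (x : ℝ) :
    ∑ k ∈ range (n + 2), ((n + 1).choose k : ℝ) * a k * x ^ k
      = p * z * ∑ k ∈ range (n + 1), (n.choose k : ℝ) * a k * (x ^ (k + 1) / (k + 1))
        + (1 - p * x) * ∑ k ∈ range (n + 1), (n.choose k : ℝ) * a k * x ^ k := by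
  simp only [mul_assoc]
  rw [sum_choose_succ_mul (fun k _ => a k * x ^ k)]
  simp only [mul_sum, ← sum_add_distrib]
  refine sum_congr rfl fun k _ => ?_
  have hk : (k : ℝ) + 1 ≠ 0 := by positivity
  field_simp
  linear_combination (n.choose k : ℝ) * x ^ (k + 1) * ha k

theorem stmt4_general (p z : ℝ)
    (G : ℕ → ℝ → ℝ) (hG0 : ∀ x ∈ Set.Icc (0 : ℝ) 1, G 0 x = 1)
    (hGrec : ∀ n : ℕ, ∀ x ∈ Set.Icc (0 : ℝ) 1,
      G (n + 1) x = p * z * (∫ u in (0 : ℝ)..x, G n u) + (1 - p * x) * G n x) :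
    ∀ n : ℕ, ∀ x ∈ Set.Icc (0 : ℝ) 1,
      G n x = ∑ k ∈ Finset.range (n + 1),
        (n.choose k : ℝ) * ((∏ i ∈ Finset.range k, (z - 1 - (i : ℝ))) / (k.factorial : ℝ))
          * p ^ k * x ^ k := by
  set a : ℕ → ℝ := fun k => (∏ i ∈ range k, (z - 1 - (i : ℝ))) / k ! * p ^ k with ha_def
  have ha : ∀ k : ℕ, a (k + 1) * (k + 1) = p * (z - 1 - k) * a k := fun k => by
    simp only [ha_def]
    linear_combination p ^ (k + 1) * prod_sub_div_factorial_succ_mul (z - 1) k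
  suffices h : ∀ n, ∀ x ∈ Set.Icc (0 : ℝ) 1,
      G n x = ∑ k ∈ range (n + 1), (n.choose k : ℝ) * a k * x ^ k by
    simpa only [ha_def, ← mul_assoc] using h
  intro n
  induction n with
  | zero => intro x hx; simp [ha_def, hG0 x hx]
  | succ n ih =>
    intro x hx
    have hint : ∫ u in (0 : ℝ)..x, G n u
        = ∫ u in (0 : ℝ)..x, ∑ k ∈ range (n + 1), (n.choose k : ℝ) * a k * u ^ k :=
      integral_congr fun u hu => by
        rw [Set.uIcc_of_le hx.1] at hu
        exact ih u ⟨hu.1, hu.2.trans hx.2⟩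
    rw [hGrec n x hx, ih x hx, hint, integral_sum_choose_mul_pow, sum_choose_succ_mul_pow_eq ha]

theorem stmt4 (p z : ℝ) (hp : 0 < p) (hp1 : p ≤ 1)
    (G : ℕ → ℝ → ℝ) (hG0 : ∀ x ∈ Set.Icc (0 : ℝ) 1, G 0 x = 1)
    (hGrec : ∀ n : ℕ, ∀ x ∈ Set.Icc (0 : ℝ) 1,
      G (n + 1) x = p * z * (∫ u in (0 : ℝ)..x, G n u) + (1 - p * x) * G n x) :
    ∀ n : ℕ, ∀ x ∈ Set.Icc (0 : ℝ) 1,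
      G n x = ∑ k ∈ Finset.range (n + 1),
        (n.choose k : ℝ) * ((∏ i ∈ Finset.range k, (z - 1 - (i : ℝ))) / (k.factorial : ℝ))
          * p ^ k * x ^ k :=
  stmt4_general p z G hG0 hGrec
end

section
/- Let 0 < p ≤ 1 and z ∈ ℝ with |z| ≤ 1. Let G : ℕ → ℝ → ℝ satisfy G_0(x) = 1 for all x ∈ [0,1], and for every n ≥ 1 and x ∈ [0,1], G_n(x) = p·z·∫_0^x G_{n−1}(u) du + (1 − p·x)·G_{n−1}(x). Then for every x ∈ [0,1] and every y ∈ (−1,1), the series Σ_{n=0}^{∞} G_n(x)·y^n converges and equals (1 − y)^{−z} · (1 − y + p·x·y)^{z−1}, where the powers are real powers of the positive reals 1 − y and 1 − y + p·x·y. -/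
open MeasureTheory intervalIntegral Finset

/-!
Writing `v = p x`, the recurrence is solved by `G n x = ∑ₖ C(n,k) C(z-1,k) vᵏ`. The
generating function of this monomial form only converges for `|v y| < |1 - y|`, so the
closed form is first rewritten in the Bernstein basis, `∑ₖ C(n,k) C(z+k-1,k) vᵏ (1-v)ⁿ⁻ᵏ` (a
Chu–Vandermonde computation), whose coefficients are those of `(1 - w)^(-z)`. With
`u = v y` and `q = (1 - v) y` the generating function becomes the double series
`∑ₖ,ₘ C(z+k-1,k) C(k+m,k) uᵏ qᵐ`, absolutely convergent because `|u| + |q| = |y| < 1`;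
summing over `m` first gives
`(1 - q)⁻¹ (1 - u / (1 - q))^(-z) = (1 - y)^(-z) (1 - y + v y)^(z - 1)`.
-/

theorem Ring.choose_succ_eq_mul_div {K : Type*} [Field K] [CharZero K] (r : K) (k : ℕ) :
    Ring.choose r (k + 1) = Ring.choose r k * (r - k) / (k + 1) := by
  have h := Ring.choose_smul_choose r (Nat.le_succ k)
  rw [Nat.choose_succ_self_right, Nat.succ_sub (le_refl k), Nat.sub_self, Ring.choose_one_right,
    nsmul_eq_mul] at h
  rw [eq_div_iff (Nat.cast_add_one_ne_zero k), ← h]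
  push_cast; ring

theorem Ring.choose_neg_eq_neg_one_pow_mul {R : Type*} [CommRing R] [BinomialRing R]
    (r : R) (k : ℕ) : Ring.choose (-r) k = (-1) ^ k * Ring.choose (r + k - 1) k := by
  rw [Ring.choose_neg, Units.smul_def, Int.negOnePow_def]
  simp

theorem sum_range_choose_mul_neg_one_pow_mul_choose {R : Type*} [CommRing R] [BinomialRing R]
    (z : R) (j : ℕ) :
    ∑ k ∈ range (j + 1), (j.choose k : R) * (-1) ^ (j - k) * Ring.choose (z + k - 1) k
      = Ring.choose (z - 1) j := by
  have hvdm := Ring.add_choose_eq (r := -z) (s := (j : R)) j (Commute.all _ _)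
  rw [Nat.sum_antidiagonal_eq_sum_range_succ
    (fun k i => Ring.choose (-z) k * Ring.choose (j : R) i), neg_add_eq_sub, ← neg_sub,
    Ring.choose_neg_eq_neg_one_pow_mul, sub_add_cancel] at hvdm
  have hsq : ∀ i : ℕ, ((-1 : R) ^ i) * (-1) ^ i = 1 := fun i => by rw [← mul_pow]; simp
  calc ∑ k ∈ range (j + 1), (j.choose k : R) * (-1) ^ (j - k) * Ring.choose (z + k - 1) k
      = (-1) ^ j * ∑ k ∈ range (j + 1), Ring.choose (-z) k * Ring.choose (j : R) (j - k) := by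
        rw [mul_sum]
        refine sum_congr rfl fun k hk => ?_
        have hkj : k ≤ j := Nat.lt_succ_iff.mp (mem_range.mp hk)
        rw [Ring.choose_neg_eq_neg_one_pow_mul, Ring.choose_natCast, Nat.choose_symm hkj,
          show (-1 : R) ^ j = (-1) ^ (j - k) * (-1) ^ k by rw [← pow_add, Nat.sub_add_cancel hkj]]
        linear_combination
          -((j.choose k : R) * (-1) ^ (j - k) * Ring.choose (z + k - 1) k) * hsq k
    _ = Ring.choose (z - 1) j := by
        rw [← hvdm, ← mul_assoc, hsq, one_mul]

theorem sum_range_choose_mul_pow_mul_one_sub_pow {R : Type*} [CommRing R] (a : ℕ → R) (v : R)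
    (n : ℕ) :
    ∑ k ∈ range (n + 1), (n.choose k : R) * a k * v ^ k * (1 - v) ^ (n - k)
      = ∑ j ∈ range (n + 1),
          (n.choose j : R) * (∑ k ∈ range (j + 1), (j.choose k : R) * (-1) ^ (j - k) * a k)
            * v ^ j := by
  calc ∑ k ∈ range (n + 1), (n.choose k : R) * a k * v ^ k * (1 - v) ^ (n - k)
      = ∑ k ∈ range (n + 1), ∑ j ∈ Ico k (n + 1),
          (n.choose k : R) * a k * v ^ k * ((-v) ^ (j - k) * ((n - k).choose (j - k) : R)) := by
        refine sum_congr rfl fun k hk => ?_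
        rw [sum_Ico_eq_sum_range, ← mul_sum, sub_eq_neg_add, add_pow]
        simp only [one_pow, mul_one, Nat.add_sub_cancel_left]
        rw [Nat.sub_add_comm (Nat.lt_succ_iff.mp (mem_range.mp hk))]
    _ = ∑ j ∈ range (n + 1), ∑ k ∈ range (j + 1),
          (n.choose k : R) * a k * v ^ k * ((-v) ^ (j - k) * ((n - k).choose (j - k) : R)) := by
        refine sum_comm' fun k j => ?_
        simp only [mem_range, mem_Ico]
        omega
    _ = _ := by
        refine sum_congr rfl fun j hj => ?_
        rw [mul_sum, sum_mul]
        refine sum_congr rfl fun k hk => ?_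
        have hkj : k ≤ j := Nat.lt_succ_iff.mp (mem_range.mp hk)
        have hchoose : (n.choose k : R) * ((n - k).choose (j - k) : R)
            = (n.choose j : R) * (j.choose k : R) := by
          rw [← Nat.cast_mul, ← Nat.cast_mul, Nat.choose_mul hkj]
        rw [neg_pow, show v ^ j = v ^ k * v ^ (j - k) by rw [← pow_add, Nat.add_sub_cancel' hkj]]
        linear_combination (a k * v ^ k * (-1) ^ (j - k) * v ^ (j - k)) * hchoose

noncomputable def jumpPoly (z : ℝ) (n : ℕ) (v : ℝ) : ℝ :=
  ∑ k ∈ range (n + 1), (n.choose k : ℝ) * Ring.choose (z - 1) k * v ^ k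

theorem jumpPoly_succ (z v : ℝ) (n : ℕ) :
    jumpPoly z (n + 1) v
      = z * ∑ k ∈ range (n + 1),
          (n.choose k : ℝ) * Ring.choose (z - 1) k * (v ^ (k + 1) / (k + 1))
        + (1 - v) * jumpPoly z n v := by
  have hcoeff : ∀ k : ℕ,
      ((n + 1).choose (k + 1) : ℝ) * Ring.choose (z - 1) (k + 1) * v ^ (k + 1)
      = z * ((n.choose k : ℝ) * Ring.choose (z - 1) k * (v ^ (k + 1) / (k + 1)))
        + ((n.choose (k + 1) : ℝ) * Ring.choose (z - 1) (k + 1) * v ^ (k + 1)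
          - v * ((n.choose k : ℝ) * Ring.choose (z - 1) k * v ^ k)) := by
    intro k
    rw [Nat.choose_succ_succ', Ring.choose_succ_eq_mul_div]
    field_simp
    push_cast
    ring
  have hshift : jumpPoly z n v
      = 1 + ∑ k ∈ range (n + 1),
          (n.choose (k + 1) : ℝ) * Ring.choose (z - 1) (k + 1) * v ^ (k + 1) := by
    rw [jumpPoly, sum_range_succ', sum_range_succ, Nat.choose_succ_self]
    simp [add_comm]
  rw [jumpPoly, sum_range_succ', sum_congr rfl fun k _ => hcoeff k, sum_add_distrib,
    sum_sub_distrib, ← mul_sum, ← mul_sum, ← jumpPoly, hshift]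
  simp only [Nat.choose_zero_right, Nat.cast_one, Ring.choose_zero_right', sub_add_cancel,
    pow_zero, mul_one]
  ring

theorem mul_integral_jumpPoly_mul (z p x : ℝ) (n : ℕ) :
    p * ∫ u in (0 : ℝ)..x, jumpPoly z n (p * u)
      = ∑ k ∈ range (n + 1),
          (n.choose k : ℝ) * Ring.choose (z - 1) k * ((p * x) ^ (k + 1) / (k + 1)) := by
  simp only [jumpPoly]
  rw [intervalIntegral.integral_finsetSum fun k _ =>
    (by fun_prop : Continuous _).intervalIntegrable _ _, mul_sum]
  refine sum_congr rfl fun k _ => ?_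
  simp only [mul_pow, intervalIntegral.integral_const_mul, integral_pow]
  ring

theorem eq_jumpPoly_of_recurrence {p z : ℝ} {G : ℕ → ℝ → ℝ}
    (hG0 : ∀ x ∈ Set.Icc (0 : ℝ) 1, G 0 x = 1)
    (hGrec : ∀ n : ℕ, ∀ x ∈ Set.Icc (0 : ℝ) 1,
      G (n + 1) x = p * z * (∫ u in (0 : ℝ)..x, G n u) + (1 - p * x) * G n x) (n : ℕ) :
    ∀ x ∈ Set.Icc (0 : ℝ) 1, G n x = jumpPoly z n (p * x) := by
  induction n with
  | zero => intro x hx; simp [hG0 x hx, jumpPoly]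
  | succ n ih =>
    intro x hx
    have hint : ∫ u in (0 : ℝ)..x, G n u = ∫ u in (0 : ℝ)..x, jumpPoly z n (p * u) := by
      refine intervalIntegral.integral_congr fun u hu => ih u ?_
      rw [Set.uIcc_of_le hx.1] at hu
      exact ⟨hu.1, hu.2.trans hx.2⟩
    rw [hGrec n x hx, hint, ih x hx, jumpPoly_succ, mul_comm p z, mul_assoc,
      mul_integral_jumpPoly_mul]

theorem jumpPoly_eq_sum_bernstein (z v : ℝ) (n : ℕ) :
    jumpPoly z n v = ∑ k ∈ range (n + 1),
      (n.choose k : ℝ) * Ring.choose (z + k - 1) k * v ^ k * (1 - v) ^ (n - k) := by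
  simp only [sum_range_choose_mul_pow_mul_one_sub_pow, sum_range_choose_mul_neg_one_pow_mul_choose,
    jumpPoly]

theorem HasSum.sum_antidiagonal {α : Type*} [AddCommMonoid α] [TopologicalSpace α]
    [ContinuousAdd α] [RegularSpace α] {f : ℕ × ℕ → α} {a : α} (h : HasSum f a) :
    HasSum (fun n => ∑ kl ∈ antidiagonal n, f kl) a :=
  (HasAntidiagonal.sigmaAntidiagonalEquivProd.hasSum_iff.mpr h).sigma fun n =>
    (antidiagonal n).hasSum f

theorem hasSum_mul_choose_mul_geometric (c w : ℝ) {r : ℝ} (hr : |r| < 1) (k : ℕ) :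
    HasSum (fun m : ℕ => c * w ^ k * (((m + k).choose k : ℝ) * r ^ m))
      (c * (w / (1 - r)) ^ k / (1 - r)) := by
  rw [show c * (w / (1 - r)) ^ k / (1 - r) = c * w ^ k * (1 / (1 - r) ^ (k + 1)) by
    rw [div_pow, pow_succ, one_div, mul_inv]; ring]
  exact (hasSum_choose_mul_geometric_of_norm_lt_one (𝕜 := ℝ) k
    (by rwa [Real.norm_eq_abs])).mul_left _

theorem hasSum_sum_range_choose_mul_pow_mul_pow {a : ℕ → ℝ} {u q s : ℝ} (hq : |q| < 1)
    (habs : Summable fun k => |a k| * (|u| / (1 - |q|)) ^ k)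
    (hs : HasSum (fun k => a k * (u / (1 - q)) ^ k) s) :
    HasSum (fun n => ∑ k ∈ range (n + 1), (n.choose k : ℝ) * a k * u ^ k * q ^ (n - k))
      (s / (1 - q)) := by
  set f : ℕ × ℕ → ℝ :=
    fun km => a km.1 * u ^ km.1 * (((km.2 + km.1).choose km.1 : ℝ) * q ^ km.2)
  have hrow_abs (k : ℕ) := hasSum_mul_choose_mul_geometric |a k| |u| (by rwa [abs_abs]) k
  have hf : Summable f := by
    refine Summable.of_norm ((summable_prod_of_nonneg fun _ => norm_nonneg _).mpr ⟨?_, ?_⟩)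
    · simpa [f, abs_mul] using fun k => (hrow_abs k).summable
    · simpa [f, abs_mul, (hrow_abs _).tsum_eq] using habs.div_const (1 - |q|)
  have hval : HasSum f (s / (1 - q)) := by
    have h := hf.hasSum.prod_fiberwise fun k => hasSum_mul_choose_mul_geometric (a k) u hq k
    rw [← h.unique (hs.div_const _)]
    exact hf.hasSum
  convert hval.sum_antidiagonal using 1
  funext n
  rw [Nat.sum_antidiagonal_eq_sum_range_succ_mk]
  refine sum_congr rfl fun k hk => ?_
  simp only [f, Nat.sub_add_cancel (Nat.lt_succ_iff.mp (mem_range.mp hk))]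
  ring

theorem hasSum_choose_add_sub_one_mul_pow (z : ℝ) {w : ℝ} (hw : |w| < 1) :
    HasSum (fun k : ℕ => Ring.choose (z + k - 1) k * w ^ k) ((1 - w) ^ (-z)) := by
  have h := (Real.one_div_one_sub_rpow_hasFPowerSeriesOnBall_zero z).hasSum
    (y := w) (by simpa [enorm_eq_nnnorm, ← NNReal.coe_lt_one] using hw)
  simpa [FormalMultilinearSeries.ofScalars_apply_eq, mul_comm,
    Real.rpow_neg (show (0 : ℝ) ≤ 1 - w by linarith [le_abs_self w])] using h

theorem summable_abs_choose_add_sub_one_mul_pow (z : ℝ) {r : ℝ} (hr0 : 0 ≤ r) (hr : r < 1) :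
    Summable (fun k : ℕ => |Ring.choose (z + k - 1) k| * r ^ k) := by
  lift r to NNReal using hr0
  have hR := (Real.one_div_one_sub_rpow_hasFPowerSeriesOnBall_zero z).r_le
  simpa [FormalMultilinearSeries.ofScalars_norm] using
    FormalMultilinearSeries.summable_norm_mul_pow _
      ((ENNReal.coe_lt_one_iff.2 (by exact_mod_cast hr)).trans_le hR)

theorem hasSum_jumpPoly_mul_pow (z : ℝ) {v y : ℝ} (hv0 : 0 ≤ v) (hv1 : v ≤ 1) (hy : |y| < 1) :
    HasSum (fun n => jumpPoly z n v * y ^ n)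
      ((1 - y) ^ (-z) * (1 - y + v * y) ^ (z - 1)) := by
  set u := v * y
  set q := (1 - v) * y
  have huq : |u| + |q| = |y| := by
    simp only [u, q, abs_mul, abs_of_nonneg hv0, abs_of_nonneg (sub_nonneg.2 hv1)]
    ring
  have hq : |q| < 1 := by linarith [abs_nonneg u]
  have h1q : 0 < 1 - q := by linarith [le_abs_self q]
  have h1y : 0 < 1 - y := by linarith [le_abs_self y]
  have hr : |u| / (1 - |q|) < 1 := (div_lt_one (by linarith [abs_nonneg u])).2 (by linarith)
  have hw : |u / (1 - q)| < 1 := by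
    rw [abs_div, abs_of_pos h1q, div_lt_one h1q]
    linarith [le_abs_self q]
  have key := hasSum_sum_range_choose_mul_pow_mul_pow hq
    (summable_abs_choose_add_sub_one_mul_pow z (div_nonneg (abs_nonneg u) (by linarith)) hr)
    (hasSum_choose_add_sub_one_mul_pow z hw)
  convert key using 1
  · funext n
    rw [jumpPoly_eq_sum_bernstein, sum_mul]
    refine sum_congr rfl fun k hk => ?_
    rw [show y ^ n = y ^ k * y ^ (n - k) by
      rw [← pow_add, Nat.add_sub_cancel' (Nat.lt_succ_iff.mp (mem_range.mp hk))]]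
    simp only [u, q, mul_pow]
    ring
  · have hbase : 1 - u / (1 - q) = (1 - y) / (1 - q) := by
      field_simp
      ring
    rw [hbase, Real.div_rpow h1y.le h1q.le, show 1 - y + v * y = 1 - q by ring,
      Real.rpow_sub h1q, Real.rpow_one, Real.rpow_neg h1q.le]
    field_simp

theorem stmt6_general (p z : ℝ) (hp : 0 < p) (hp1 : p ≤ 1)
    (G : ℕ → ℝ → ℝ) (hG0 : ∀ x ∈ Set.Icc (0 : ℝ) 1, G 0 x = 1)
    (hGrec : ∀ n : ℕ, ∀ x ∈ Set.Icc (0 : ℝ) 1,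
      G (n + 1) x = p * z * (∫ u in (0 : ℝ)..x, G n u) + (1 - p * x) * G n x) :
    ∀ x ∈ Set.Icc (0 : ℝ) 1, ∀ y ∈ Set.Ioo (-1 : ℝ) 1,
      HasSum (fun n : ℕ => G n x * y ^ n)
        ((1 - y) ^ (-z) * (1 - y + p * x * y) ^ (z - 1)) := by
  intro x hx y hy
  have hG : ∀ n, G n x = jumpPoly z n (p * x) := fun n =>
    eq_jumpPoly_of_recurrence hG0 hGrec n x hx
  simp only [hG]
  exact hasSum_jumpPoly_mul_pow z (mul_nonneg hp.le hx.1) (mul_le_one₀ hp1 hx.1 hx.2)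
    (abs_lt.2 hy)

theorem stmt6 (p z : ℝ) (hp : 0 < p) (hp1 : p ≤ 1) (hz : |z| ≤ 1)
    (G : ℕ → ℝ → ℝ) (hG0 : ∀ x ∈ Set.Icc (0 : ℝ) 1, G 0 x = 1)
    (hGrec : ∀ n : ℕ, ∀ x ∈ Set.Icc (0 : ℝ) 1,
      G (n + 1) x = p * z * (∫ u in (0 : ℝ)..x, G n u) + (1 - p * x) * G n x) :
    ∀ x ∈ Set.Icc (0 : ℝ) 1, ∀ y ∈ Set.Ioo (-1 : ℝ) 1,
      HasSum (fun n : ℕ => G n x * y ^ n)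
        ((1 - y) ^ (-z) * (1 - y + p * x * y) ^ (z - 1)) :=
  stmt6_general p z hp hp1 G hG0 hGrec
end

section
/- Let 0 < p ≤ 1 and t ≥ 0. Let W : ℕ → ℝ → ℝ satisfy W_0(x) = 1 for all x ∈ [0,1], and for every n ≥ 1 and x ∈ [0,1], W_n(x) = (1 − p·x)·e^{−t·x}·W_{n−1}(x) + p·∫_0^x e^{−t·y}·W_{n−1}(y) dy. Then for every x ∈ [0,1] and every z with 0 ≤ z < 1, the series Σ_{n=0}^{∞} W_n(x)·z^n converges and equals (1 − z·(1 − p·x)·e^{−t·x})^{−1} · exp( ∫_0^x p·z·e^{−t·s} / (1 − z·(1 − p·s)·e^{−t·s}) ds ). -/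
/-!
Every `W n` takes values in `[0, 1]` on `[0, 1]`, so for `0 ≤ z < 1` the generating function
`F = ∑ W n · zⁿ` converges uniformly there. Multiplying the recurrence by `zⁿ⁺¹` and summing
gives `D x · F x = 1 + p z ∫₀ˣ e^{-t y} F y dy` with `D x = 1 - z (1 - p x) e^{-t x}`; thus
`H = D · F` solves the linear equation `H = 1 + ∫ g H` with `g = p z e^{-t s} / D s`, whose only
solution is `exp (∫ g)`.
-/

open MeasureTheory intervalIntegral Set Filter Topology

theorem continuousOn_primitive_Icc {f : ℝ → ℝ} {a b : ℝ} (hf : ContinuousOn f (Icc a b)) :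
    ContinuousOn (fun u => ∫ s in a..u, f s) (Icc a b) := by
  rcases le_or_gt a b with hab | hab
  · have h := continuousOn_primitive_interval (μ := volume) (f := f) (a := a) (b := b)
      (by rw [uIcc_of_le hab]; exact hf.integrableOn_Icc)
    rwa [uIcc_of_le hab] at h
  · simp [Icc_eq_empty_of_lt hab]

theorem hasDerivWithinAt_integral_Ici_of_continuousOn {f : ℝ → ℝ} {a b x : ℝ}
    (hf : ContinuousOn f (Icc a b)) (hx : x ∈ Ico a b) :
    HasDerivWithinAt (fun u => ∫ s in a..u, f s) (f x) (Ici x) x := by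
  have hnhds : Icc a b ∈ 𝓝[>] x :=
    mem_of_superset (Ioc_mem_nhdsGT hx.2) (Ioc_subset_Icc_self.trans (Icc_subset_Icc_left hx.1))
  refine integral_hasDerivWithinAt_right (t := Ioi x) ?_ ?_ ?_
  · refine (hf.mono ?_).intervalIntegrable
    rw [uIcc_of_le hx.1]
    exact Icc_subset_Icc_right hx.2.le
  · exact ⟨Icc a b, hnhds, hf.aestronglyMeasurable measurableSet_Icc⟩
  · exact (hf.continuousWithinAt (Ico_subset_Icc_self hx)).mono_of_mem_nhdsWithin hnhds

theorem eq_mul_exp_integral_of_eq_add_integral {g H : ℝ → ℝ} {a b c : ℝ}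
    (hg : ContinuousOn g (Icc a b)) (hH : ContinuousOn H (Icc a b))
    (hHeq : ∀ u ∈ Icc a b, H u = c + ∫ s in a..u, g s * H s) :
    ∀ u ∈ Icc a b, H u = c * Real.exp (∫ s in a..u, g s) := by
  set G : ℝ → ℝ := fun u => ∫ s in a..u, g s
  have hconst := constant_of_has_deriv_right_zero (f := fun u => H u * Real.exp (-G u))
    (hH.mul (continuousOn_primitive_Icc hg).neg.rexp) fun x hx => by
      have hnhds : Icc a b ∈ 𝓝[≥] x :=
        mem_of_superset (Icc_mem_nhdsGE hx.2) (Icc_subset_Icc_left hx.1)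
      have hH' : HasDerivWithinAt H (g x * H x) (Ici x) x :=
        ((hasDerivWithinAt_integral_Ici_of_continuousOn (hg.mul hH) hx).const_add c
          ).congr_of_eventuallyEq (eventually_of_mem hnhds hHeq) (hHeq x (Ico_subset_Icc_self hx))
      have hG' : HasDerivWithinAt (fun u => Real.exp (-G u)) (Real.exp (-G x) * -g x) (Ici x) x :=
        (hasDerivWithinAt_integral_Ici_of_continuousOn hg hx).neg.exp
      exact (hH'.mul hG').congr_deriv (by ring)
  intro u hu
  have h := hconst u hu
  simp only [G, integral_same, neg_zero, Real.exp_zero, mul_one] at h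
  have ha : H a = c := by simpa using hHeq a (left_mem_Icc.2 (hu.1.trans hu.2))
  rw [← ha, ← h, mul_assoc, ← Real.exp_add, neg_add_cancel, Real.exp_zero, mul_one]

theorem mul_exp_neg_mem_Icc {p t s : ℝ} (hp : 0 ≤ p) (hp1 : p ≤ 1) (ht : 0 ≤ t)
    (hs : s ∈ Icc (0 : ℝ) 1) : (1 - p * s) * Real.exp (-t * s) ∈ Icc 0 (1 - p * s) := by
  have hps : 0 ≤ 1 - p * s := by nlinarith [hs.1, hs.2]
  have hexp : Real.exp (-t * s) ≤ 1 := Real.exp_le_one_iff.2 (by nlinarith [hs.1])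
  exact ⟨by positivity, mul_le_of_le_one_right hps hexp⟩

theorem one_sub_mul_mul_exp_neg_pos {p t s z : ℝ} (hp : 0 ≤ p) (hp1 : p ≤ 1) (ht : 0 ≤ t)
    (hs : s ∈ Icc (0 : ℝ) 1) (hz0 : 0 ≤ z) (hz1 : z < 1) :
    0 < 1 - z * (1 - p * s) * Real.exp (-t * s) := by
  obtain ⟨h0, h1⟩ := mul_exp_neg_mem_Icc hp hp1 ht hs
  nlinarith [mul_nonneg hp hs.1]

structure IsStaircaseLaplace (p t : ℝ) (W : ℕ → ℝ → ℝ) : Prop where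
  zero : ∀ x ∈ Icc (0 : ℝ) 1, W 0 x = 1
  succ : ∀ n : ℕ, ∀ x ∈ Icc (0 : ℝ) 1,
    W (n + 1) x = (1 - p * x) * Real.exp (-t * x) * W n x
      + p * ∫ y in (0 : ℝ)..x, Real.exp (-t * y) * W n y

noncomputable def genFun (W : ℕ → ℝ → ℝ) (z x : ℝ) : ℝ := ∑' n, W n x * z ^ n

namespace IsStaircaseLaplace

variable {p t z : ℝ} {W : ℕ → ℝ → ℝ}

theorem continuousOn (hW : IsStaircaseLaplace p t W) (n : ℕ) :
    ContinuousOn (W n) (Icc 0 1) := by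
  induction n with
  | zero => exact continuousOn_const.congr hW.zero
  | succ n ih =>
    have hint := continuousOn_primitive_Icc (a := 0) (b := 1)
      (f := fun y => Real.exp (-t * y) * W n y) (by fun_prop)
    exact (by fun_prop : ContinuousOn (fun x => (1 - p * x) * Real.exp (-t * x) * W n x
      + p * ∫ y in (0 : ℝ)..x, Real.exp (-t * y) * W n y) (Icc 0 1)).congr (hW.succ n)

theorem mem_Icc (hW : IsStaircaseLaplace p t W) (hp : 0 ≤ p) (hp1 : p ≤ 1) (ht : 0 ≤ t)
    (n : ℕ) : ∀ x ∈ Icc (0 : ℝ) 1, W n x ∈ Icc (0 : ℝ) 1 := by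
  induction n with
  | zero => intro x hx; simp [hW.zero x hx]
  | succ n ih =>
    intro x hx
    have hsub : Icc 0 x ⊆ Icc (0 : ℝ) 1 := Icc_subset_Icc_right hx.2
    have hf : ∀ y ∈ Icc 0 x, Real.exp (-t * y) * W n y ∈ Icc (0 : ℝ) 1 := fun y hy =>
      ⟨mul_nonneg (Real.exp_pos _).le (ih y (hsub hy)).1,
        mul_le_one₀ (Real.exp_le_one_iff.2 (by nlinarith [hy.1])) (ih y (hsub hy)).1
          (ih y (hsub hy)).2⟩
    have hint_nonneg : 0 ≤ ∫ y in (0 : ℝ)..x, Real.exp (-t * y) * W n y :=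
      integral_nonneg hx.1 fun y hy => (hf y hy).1
    have hint_le : ∫ y in (0 : ℝ)..x, Real.exp (-t * y) * W n y ≤ x := by
      have hcont := (hW.continuousOn n).mono hsub
      simpa using integral_mono_on hx.1
        (ContinuousOn.intervalIntegrable_of_Icc (μ := volume) hx.1 (by fun_prop))
        intervalIntegrable_const fun y hy => (hf y hy).2
    obtain ⟨hw0, hw1⟩ := mul_exp_neg_mem_Icc hp hp1 ht hx
    obtain ⟨hW0, hW1⟩ := ih x hx
    rw [hW.succ n x hx]
    constructor <;> nlinarith [mul_le_of_le_one_right hw0 hW1]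

theorem norm_mul_pow_le (hW : IsStaircaseLaplace p t W) (hp : 0 ≤ p) (hp1 : p ≤ 1)
    (ht : 0 ≤ t) (hz0 : 0 ≤ z) (n : ℕ) {x : ℝ} (hx : x ∈ Icc (0 : ℝ) 1) :
    ‖W n x * z ^ n‖ ≤ z ^ n := by
  obtain ⟨h0, h1⟩ := hW.mem_Icc hp hp1 ht n x hx
  rw [norm_mul, Real.norm_of_nonneg h0, norm_pow, Real.norm_of_nonneg hz0]
  exact mul_le_of_le_one_left (by positivity) h1

theorem hasSum_genFun (hW : IsStaircaseLaplace p t W) (hp : 0 ≤ p) (hp1 : p ≤ 1)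
    (ht : 0 ≤ t) (hz0 : 0 ≤ z) (hz1 : z < 1) {x : ℝ} (hx : x ∈ Icc (0 : ℝ) 1) :
    HasSum (fun n => W n x * z ^ n) (genFun W z x) :=
  ((summable_geometric_of_lt_one hz0 hz1).of_norm_bounded
    fun n => hW.norm_mul_pow_le hp hp1 ht hz0 n hx).hasSum

theorem continuousOn_genFun (hW : IsStaircaseLaplace p t W) (hp : 0 ≤ p) (hp1 : p ≤ 1)
    (ht : 0 ≤ t) (hz0 : 0 ≤ z) (hz1 : z < 1) : ContinuousOn (genFun W z) (Icc 0 1) :=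
  continuousOn_tsum (fun n => (hW.continuousOn n).mul continuousOn_const)
    (summable_geometric_of_lt_one hz0 hz1) fun n _ hx => hW.norm_mul_pow_le hp hp1 ht hz0 n hx

theorem hasSum_integral_genFun (hW : IsStaircaseLaplace p t W) (hp : 0 ≤ p) (hp1 : p ≤ 1)
    (ht : 0 ≤ t) (hz0 : 0 ≤ z) (hz1 : z < 1) {x : ℝ} (hx : x ∈ Icc (0 : ℝ) 1) :
    HasSum (fun n => (∫ y in (0 : ℝ)..x, Real.exp (-t * y) * W n y) * z ^ n)
      (∫ y in (0 : ℝ)..x, Real.exp (-t * y) * genFun W z y) := by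
  have hsub : uIoc (0 : ℝ) x ⊆ Icc 0 1 := by
    rw [uIoc_of_le hx.1]; exact Ioc_subset_Icc_self.trans (Icc_subset_Icc_right hx.2)
  simp only [← intervalIntegral.integral_mul_const]
  refine hasSum_integral_of_dominated_convergence (fun n _ => z ^ n) (fun n => ?_)
    (fun n => ae_of_all _ fun y hy => ?_)
    (ae_of_all _ fun _ _ => summable_geometric_of_lt_one hz0 hz1) intervalIntegrable_const
    (ae_of_all _ fun y hy => ?_)
  · have hcont := (hW.continuousOn n).mono hsub
    exact ContinuousOn.aestronglyMeasurable (by fun_prop) measurableSet_uIoc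
  · rw [mul_assoc, norm_mul, Real.norm_of_nonneg (Real.exp_pos _).le]
    have hexp : Real.exp (-t * y) ≤ 1 := Real.exp_le_one_iff.2 (by nlinarith [(hsub hy).1])
    exact (mul_le_of_le_one_left (norm_nonneg _) hexp).trans
      (hW.norm_mul_pow_le hp hp1 ht hz0 n (hsub hy))
  · simpa only [mul_assoc] using (hW.hasSum_genFun hp hp1 ht hz0 hz1 (hsub hy)).mul_left _

theorem genFun_integral_eq (hW : IsStaircaseLaplace p t W) (hp : 0 ≤ p) (hp1 : p ≤ 1)
    (ht : 0 ≤ t) (hz0 : 0 ≤ z) (hz1 : z < 1) {x : ℝ} (hx : x ∈ Icc (0 : ℝ) 1) :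
    (1 - z * (1 - p * x) * Real.exp (-t * x)) * genFun W z x
      = 1 + p * z * ∫ y in (0 : ℝ)..x, Real.exp (-t * y) * genFun W z y := by
  have hsum := hW.hasSum_genFun hp hp1 ht hz0 hz1 hx
  have htail : HasSum (fun n => W (n + 1) x * z ^ (n + 1)) (genFun W z x - 1) := by
    rw [← hasSum_nat_add_iff' 1] at hsum
    simpa [hW.zero x hx] using hsum
  have hrec : HasSum (fun n => W (n + 1) x * z ^ (n + 1))
      (z * (1 - p * x) * Real.exp (-t * x) * genFun W z x
        + p * z * ∫ y in (0 : ℝ)..x, Real.exp (-t * y) * genFun W z y) := by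
    refine ((hsum.mul_left (z * (1 - p * x) * Real.exp (-t * x))).add
      ((hW.hasSum_integral_genFun hp hp1 ht hz0 hz1 hx).mul_left (p * z))).congr_fun fun n => ?_
    rw [hW.succ n x hx]
    ring
  linarith [htail.unique hrec]

theorem genFun_eq (hW : IsStaircaseLaplace p t W) (hp : 0 ≤ p) (hp1 : p ≤ 1)
    (ht : 0 ≤ t) (hz0 : 0 ≤ z) (hz1 : z < 1) {x : ℝ} (hx : x ∈ Icc (0 : ℝ) 1) :
    genFun W z x = (1 - z * (1 - p * x) * Real.exp (-t * x))⁻¹ *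
      Real.exp (∫ s in (0 : ℝ)..x,
        p * z * Real.exp (-t * s) / (1 - z * (1 - p * s) * Real.exp (-t * s))) := by
  set D : ℝ → ℝ := fun s => 1 - z * (1 - p * s) * Real.exp (-t * s)
  have hD : ∀ s ∈ Icc (0 : ℝ) 1, D s ≠ 0 := fun s hs =>
    (one_sub_mul_mul_exp_neg_pos hp hp1 ht hs hz0 hz1).ne'
  have hF := hW.continuousOn_genFun hp hp1 ht hz0 hz1
  have hH := eq_mul_exp_integral_of_eq_add_integral (a := 0) (b := 1) (c := 1)
    (g := fun s => p * z * Real.exp (-t * s) / D s) (H := fun s => D s * genFun W z s)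
    (by fun_prop (disch := exact hD)) (by fun_prop) (fun u hu => ?_) x hx
  · rw [one_mul] at hH
    rw [← hH, inv_mul_cancel_left₀ (hD x hx)]
  · rw [hW.genFun_integral_eq hp hp1 ht hz0 hz1 hu, ← intervalIntegral.integral_const_mul]
    congr 1
    refine integral_congr fun s hs => ?_
    rw [uIcc_of_le hu.1] at hs
    have := hD s ⟨hs.1, hs.2.trans hu.2⟩
    field_simp

end IsStaircaseLaplace

theorem stmt8 (p t : ℝ) (hp : 0 < p) (hp1 : p ≤ 1) (ht : 0 ≤ t)
    (W : ℕ → ℝ → ℝ) (hW0 : ∀ x ∈ Set.Icc (0 : ℝ) 1, W 0 x = 1)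
    (hWrec : ∀ n : ℕ, ∀ x ∈ Set.Icc (0 : ℝ) 1,
      W (n + 1) x = (1 - p * x) * Real.exp (-t * x) * W n x
        + p * ∫ y in (0 : ℝ)..x, Real.exp (-t * y) * W n y) :
    ∀ x ∈ Set.Icc (0 : ℝ) 1, ∀ z : ℝ, 0 ≤ z → z < 1 →
      HasSum (fun n : ℕ => W n x * z ^ n)
        ((1 - z * (1 - p * x) * Real.exp (-t * x))⁻¹ *
          Real.exp (∫ s in (0 : ℝ)..x,
            p * z * Real.exp (-t * s) / (1 - z * (1 - p * s) * Real.exp (-t * s)))) := by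
  intro x hx z hz0 hz1
  have hW : IsStaircaseLaplace p t W := ⟨hW0, hWrec⟩
  rw [← hW.genFun_eq hp.le hp1 ht hz0 hz1 hx]
  exact hW.hasSum_genFun hp.le hp1 ht hz0 hz1 hx
end

section
/- Let 0 < p ≤ 1 and t ≥ 0. Let W : ℕ → ℝ → ℝ satisfy W_0(x) = 1 for all x ∈ [0,1], and for every n ≥ 1 and x ∈ [0,1], W_n(x) = (1 − p·x)·e^{−t·x}·W_{n−1}(x) + p·∫_0^x e^{−t·y}·W_{n−1}(y) dy. For x ∈ [0,1] and k ≥ 1 define c_k(x) = p·∫_0^x e^{−t·k·s}·(1 − p·s)^{k−1} ds, and define V : ℕ → ℝ → ℝ by V_0(x) = 1 and the recursion (i+1)·V_{i+1}(x) = Σ_{k=1}^{i+1} k·c_k(x)·V_{i+1−k}(x) for i ≥ 0 (so that formally Σ_{i≥0} V_i(x)·z^i = exp(Σ_{k≥1} c_k(x)·z^k)). Then for every n ≥ 0 and x ∈ [0,1], W_n(x) = Σ_{i=0}^{n} (1 − p·x)^{n−i} · e^{−t·(n−i)·x} · V_i(x). -/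
/-!
With `a(x) = (1 - p x) e^{-t x}` one has `c_k' = p e^{-t x} a^{k-1}`, so substituting
`Wₙ = ∑ᵢ aⁿ⁻ⁱ Vᵢ` into the recursion for `W` reduces the claim to
`V_{n+1}(x) = ∑_{k=1}^{n+1} ∫₀ˣ c_k' V_{n+1-k}`, i.e. `∂ₓ V = (∂ₓ C) V` for the generating
functions `V = ∑ Vᵢ zⁱ` and `C = ∑ c_k z^k`. The solution of this integral recursion vanishes at
`x = 0` in positive degrees, as does `C`, so comparing `x`-derivatives shows that it also solves
`z ∂_z V = (z ∂_z C) V`, the Newton recursion defining the `Vᵢ`.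
-/

open MeasureTheory intervalIntegral
open Finset

theorem sum_range_eq_sum_Icc_sub {M : Type*} [AddCommMonoid M] (n : ℕ) (f : ℕ → ℕ → M) :
    ∑ i ∈ range n, f (n - i) i = ∑ k ∈ Icc 1 n, f k (n - k) := by
  refine sum_nbij' (n - ·) (n - ·) ?_ ?_ ?_ ?_ ?_ <;> intro i hi <;>
    simp only [mem_range, mem_Icc] at hi ⊢
  all_goals first | omega | congr 1; omega

theorem sum_Icc_sum_Icc_sub_comm {M : Type*} [AddCommMonoid M] (n : ℕ) (f : ℕ → ℕ → M) :
    ∑ k ∈ Icc 1 n, ∑ j ∈ Icc 1 (n - k), f k j = ∑ j ∈ Icc 1 n, ∑ k ∈ Icc 1 (n - j), f k j :=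
  sum_comm' fun _ _ ↦ by simp only [mem_Icc]; omega

section Newton

variable {𝕜 : Type*} [RCLike 𝕜] {C D T : ℕ → 𝕜 → 𝕜}

theorem newton_of_hasDerivAt (hC : ∀ k x, HasDerivAt (C k) (D k x) x) (hC0 : ∀ k, C k 0 = 0)
    (hT : ∀ n x, HasDerivAt (T n) (∑ k ∈ Icc 1 n, D k x * T (n - k) x) x)
    (hT0 : ∀ n, T (n + 1) 0 = 0) (n : ℕ) (x : 𝕜) :
    (n : 𝕜) * T n x = ∑ k ∈ Icc 1 n, k * C k x * T (n - k) x := by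
  induction n using Nat.strong_induction_on generalizing x with
  | _ n ih =>
  set g : 𝕜 → 𝕜 := fun y ↦ n * T n y - ∑ k ∈ Icc 1 n, k * C k y * T (n - k) y
  have hswap : ∀ y, ∑ k ∈ Icc 1 n, k * C k y * ∑ j ∈ Icc 1 (n - k), D j y * T (n - k - j) y
      = ∑ j ∈ Icc 1 n, (n - j : ℕ) * (D j y * T (n - j) y) := by
    intro y
    simp_rw [mul_sum]
    rw [sum_Icc_sum_Icc_sub_comm]
    refine sum_congr rfl fun j hj ↦ ?_
    have hj := mem_Icc.mp hj
    rw [mul_left_comm, ih (n - j) (by omega) y, mul_sum]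
    refine sum_congr rfl fun k _ ↦ ?_
    rw [Nat.sub_right_comm]
    ring
  have hg : ∀ y, HasDerivAt g 0 y := by
    intro y
    have hsum := HasDerivAt.fun_sum fun k (_ : k ∈ Icc 1 n) ↦
      ((hC k y).const_mul (k : 𝕜)).mul (hT (n - k) y)
    refine (((hT n y).const_mul (n : 𝕜)).sub hsum).congr_deriv ?_
    rw [sum_add_distrib, hswap, mul_sum, ← sub_sub, ← sum_sub_distrib, ← sum_sub_distrib]
    refine sum_eq_zero fun j hj ↦ ?_
    rw [Nat.cast_sub (mem_Icc.mp hj).2]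
    ring
  have hg0 : g 0 = 0 := by
    cases n with
    | zero => simp [g]
    | succ n => simp [g, hT0, hC0]
  have := is_const_of_deriv_eq_zero (fun y ↦ (hg y).differentiableAt) (fun y ↦ (hg y).deriv) x 0
  rwa [hg0, sub_eq_zero] at this

end Newton

theorem eq_of_newton_recursion {K : Type*} [Field K] [CharZero K] {c a b : ℕ → K}
    (h0 : a 0 = b 0)
    (ha : ∀ i : ℕ, ((i : K) + 1) * a (i + 1) = ∑ k ∈ Icc 1 (i + 1), (k : K) * c k * a (i + 1 - k))
    (hb : ∀ i : ℕ, ((i : K) + 1) * b (i + 1) = ∑ k ∈ Icc 1 (i + 1), (k : K) * c k * b (i + 1 - k))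
    (n : ℕ) : a n = b n := by
  induction n using Nat.strong_induction_on with
  | _ n ih =>
  cases n with
  | zero => exact h0
  | succ i =>
    refine mul_left_cancel₀ (Nat.cast_add_one_ne_zero i) ?_
    rw [ha, hb]
    exact sum_congr rfl fun k hk ↦ by rw [ih (i + 1 - k) (Nat.sub_lt i.succ_pos (mem_Icc.1 hk).1)]

noncomputable def logCoeff (p t : ℝ) (k : ℕ) (x : ℝ) : ℝ :=
  p * ∫ s in (0 : ℝ)..x, Real.exp (-t * k * s) * (1 - p * s) ^ (k - 1)

noncomputable def logCoeffDeriv (p t : ℝ) (k : ℕ) (x : ℝ) : ℝ :=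
  p * (Real.exp (-t * k * x) * (1 - p * x) ^ (k - 1))

/-- The integral recursion that `Wₙ = ∑ᵢ (1 - p x)ⁿ⁻ⁱ e^{-t (n-i) x} Vᵢ` forces on the `Vᵢ`;
unlike the Newton recursion it defines functions on all of `ℝ`. -/
noncomputable def expCoeff (p t : ℝ) : ℕ → ℝ → ℝ
  | 0, _ => 1
  | n + 1, x =>
    ∑ i : Fin (n + 1), ∫ y in (0 : ℝ)..x, logCoeffDeriv p t (n + 1 - i) y * expCoeff p t i y

noncomputable def staircaseSum (p t : ℝ) (n : ℕ) (x : ℝ) : ℝ :=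
  ∑ i ∈ range (n + 1),
    (1 - p * x) ^ (n - i) * Real.exp (-t * ((n : ℝ) - (i : ℝ)) * x) * expCoeff p t i x

section Staircase

variable {p t : ℝ}

theorem continuous_logCoeffDeriv (k : ℕ) : Continuous (logCoeffDeriv p t k) := by
  unfold logCoeffDeriv; fun_prop

theorem hasDerivAt_logCoeff (k : ℕ) (x : ℝ) :
    HasDerivAt (logCoeff p t k) (logCoeffDeriv p t k x) x :=
  ((by fun_prop : Continuous fun s : ℝ ↦ Real.exp (-t * k * s) * (1 - p * s) ^ (k - 1))
    |>.integral_hasStrictDerivAt 0 x).hasDerivAt.const_mul p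

theorem logCoeff_zero_right (k : ℕ) : logCoeff p t k 0 = 0 := by
  simp [logCoeff]

theorem expCoeff_zero (x : ℝ) : expCoeff p t 0 x = 1 := by
  rw [expCoeff]

theorem expCoeff_succ (n : ℕ) (x : ℝ) : expCoeff p t (n + 1) x =
    ∑ i ∈ range (n + 1), ∫ y in (0 : ℝ)..x, logCoeffDeriv p t (n + 1 - i) y * expCoeff p t i y := by
  rw [expCoeff, Fin.sum_univ_eq_sum_range (fun i ↦ ∫ y in (0 : ℝ)..x,
    logCoeffDeriv p t (n + 1 - i) y * expCoeff p t i y)]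

theorem expCoeff_succ_zero_right (n : ℕ) : expCoeff p t (n + 1) 0 = 0 := by
  simp [expCoeff_succ]

theorem hasDerivAt_expCoeff (n : ℕ) (x : ℝ) : HasDerivAt (expCoeff p t n)
    (∑ k ∈ Icc 1 n, logCoeffDeriv p t k x * expCoeff p t (n - k) x) x := by
  induction n using Nat.strong_induction_on generalizing x with
  | _ n ih =>
  cases n with
  | zero => simpa [funext expCoeff_zero] using hasDerivAt_const x (1 : ℝ)
  | succ n =>
    have hcont : ∀ i ∈ range (n + 1), Continuous (expCoeff p t i) := fun i hi ↦
      continuous_iff_continuousAt.2 fun y ↦ (ih i (mem_range.1 hi) y).continuousAt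
    rw [funext (expCoeff_succ n), ← sum_range_eq_sum_Icc_sub (n + 1)
      (fun k i ↦ logCoeffDeriv p t k x * expCoeff p t i x)]
    exact HasDerivAt.fun_sum fun i hi ↦ (((continuous_logCoeffDeriv _).mul (hcont i hi))
      |>.integral_hasStrictDerivAt 0 x).hasDerivAt

theorem continuous_expCoeff (n : ℕ) : Continuous (expCoeff p t n) :=
  continuous_iff_continuousAt.2 fun x ↦ (hasDerivAt_expCoeff n x).continuousAt

theorem expCoeff_newton (n : ℕ) (x : ℝ) : (n : ℝ) * expCoeff p t n x =
    ∑ k ∈ Icc 1 n, k * logCoeff p t k x * expCoeff p t (n - k) x :=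
  newton_of_hasDerivAt hasDerivAt_logCoeff logCoeff_zero_right hasDerivAt_expCoeff
    expCoeff_succ_zero_right n x

theorem staircaseSum_succ (n : ℕ) (x : ℝ) : staircaseSum p t (n + 1) x =
    (1 - p * x) * Real.exp (-t * x) * staircaseSum p t n x
      + p * ∫ y in (0 : ℝ)..x, Real.exp (-t * y) * staircaseSum p t n y := by
  have hint : p * ∫ y in (0 : ℝ)..x, Real.exp (-t * y) * staircaseSum p t n y =
      expCoeff p t (n + 1) x := by
    rw [← intervalIntegral.integral_const_mul, expCoeff_succ,
      ← intervalIntegral.integral_finsetSum fun i _ ↦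
        ((continuous_logCoeffDeriv (n + 1 - i)).fun_mul
          (continuous_expCoeff i)).intervalIntegrable 0 x]
    refine intervalIntegral.integral_congr fun y _ ↦ ?_
    simp only [staircaseSum, mul_sum]
    refine sum_congr rfl fun i hi ↦ ?_
    have hi : i ≤ n := Nat.lt_succ_iff.1 (mem_range.1 hi)
    rw [logCoeffDeriv, Nat.cast_sub (by omega), show n + 1 - i - 1 = n - i by omega,
      show -t * ((n + 1 : ℕ) - i : ℝ) * y = -t * y + -t * ((n : ℝ) - i) * y by push_cast; ring,
      Real.exp_add]
    ring
  rw [hint, staircaseSum, staircaseSum, sum_range_succ, mul_sum]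
  congr 1
  · refine sum_congr rfl fun i hi ↦ ?_
    have hi : i ≤ n := Nat.lt_succ_iff.1 (mem_range.1 hi)
    rw [show n + 1 - i = n - i + 1 by omega,
      show -t * ((n + 1 : ℕ) - i : ℝ) * x = -t * x + -t * ((n : ℝ) - i) * x by push_cast; ring,
      Real.exp_add]
    ring
  · simp

end Staircase

theorem stmt9_general (p t : ℝ)
    (W : ℕ → ℝ → ℝ) (hW0 : ∀ x ∈ Set.Icc (0 : ℝ) 1, W 0 x = 1)
    (hWrec : ∀ n : ℕ, ∀ x ∈ Set.Icc (0 : ℝ) 1,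
      W (n + 1) x = (1 - p * x) * Real.exp (-t * x) * W n x
        + p * ∫ y in (0 : ℝ)..x, Real.exp (-t * y) * W n y)
    (c : ℕ → ℝ → ℝ)
    (hc : ∀ k : ℕ, 1 ≤ k → ∀ x ∈ Set.Icc (0 : ℝ) 1,
      c k x = p * ∫ s in (0 : ℝ)..x, Real.exp (-t * k * s) * (1 - p * s) ^ (k - 1))
    (V : ℕ → ℝ → ℝ) (hV0 : ∀ x ∈ Set.Icc (0 : ℝ) 1, V 0 x = 1)
    (hVrec : ∀ i : ℕ, ∀ x ∈ Set.Icc (0 : ℝ) 1,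
      ((i : ℝ) + 1) * V (i + 1) x
        = ∑ k ∈ Finset.Icc 1 (i + 1), (k : ℝ) * c k x * V (i + 1 - k) x) :
    ∀ n : ℕ, ∀ x ∈ Set.Icc (0 : ℝ) 1,
      W n x = ∑ i ∈ Finset.range (n + 1),
        (1 - p * x) ^ (n - i) * Real.exp (-t * ((n : ℝ) - (i : ℝ)) * x) * V i x := by
  have hWS : ∀ n, ∀ x ∈ Set.Icc (0 : ℝ) 1, W n x = staircaseSum p t n x := by
    intro n
    induction n with
    | zero => intro x hx; simp [hW0 x hx, staircaseSum, expCoeff_zero]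
    | succ n ih =>
      intro x hx
      rw [hWrec n x hx, staircaseSum_succ, ih x hx]
      congr 2
      refine intervalIntegral.integral_congr fun y hy ↦ ?_
      rw [Set.uIcc_of_le hx.1] at hy
      simp only [ih y ⟨hy.1, hy.2.trans hx.2⟩]
  intro n x hx
  have hVT : ∀ i, V i x = expCoeff p t i x := by
    refine eq_of_newton_recursion (c := (c · x)) (by rw [hV0 x hx, expCoeff_zero])
      (hVrec · x hx) fun i ↦ ?_
    rw [sum_congr rfl fun k hk ↦ by rw [hc k (mem_Icc.1 hk).1 x hx]]
    exact_mod_cast expCoeff_newton (i + 1) x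
  simp only [hWS n x hx, staircaseSum, hVT]

theorem stmt9 (p t : ℝ) (hp : 0 < p) (hp1 : p ≤ 1) (ht : 0 ≤ t)
    (W : ℕ → ℝ → ℝ) (hW0 : ∀ x ∈ Set.Icc (0 : ℝ) 1, W 0 x = 1)
    (hWrec : ∀ n : ℕ, ∀ x ∈ Set.Icc (0 : ℝ) 1,
      W (n + 1) x = (1 - p * x) * Real.exp (-t * x) * W n x
        + p * ∫ y in (0 : ℝ)..x, Real.exp (-t * y) * W n y)
    (c : ℕ → ℝ → ℝ)
    (hc : ∀ k : ℕ, 1 ≤ k → ∀ x ∈ Set.Icc (0 : ℝ) 1,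
      c k x = p * ∫ s in (0 : ℝ)..x, Real.exp (-t * k * s) * (1 - p * s) ^ (k - 1))
    (V : ℕ → ℝ → ℝ) (hV0 : ∀ x ∈ Set.Icc (0 : ℝ) 1, V 0 x = 1)
    (hVrec : ∀ i : ℕ, ∀ x ∈ Set.Icc (0 : ℝ) 1,
      ((i : ℝ) + 1) * V (i + 1) x
        = ∑ k ∈ Finset.Icc 1 (i + 1), (k : ℝ) * c k x * V (i + 1 - k) x) :
    ∀ n : ℕ, ∀ x ∈ Set.Icc (0 : ℝ) 1,
      W n x = ∑ i ∈ Finset.range (n + 1),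
        (1 - p * x) ^ (n - i) * Real.exp (-t * ((n : ℝ) - (i : ℝ)) * x) * V i x :=
  stmt9_general p t W hW0 hWrec c hc V hV0 hVrec
end

section
/- Let 0 < p < 1 and let f_0 : ℝ → ℝ be continuously differentiable on [0,1]. For n ≥ 1 define f_n : [0,1] → ℝ by f_n(x) = f_0(0) + ∫_0^x f_0'(s) / (1 − p·s)^n ds. Then for every n ≥ 1 and every x ∈ [0,1], (1 − p·x)·f_n(x) + p·∫_0^x f_n(y) dy = f_{n−1}(x). -/
/-! Differentiating `f_n` gives `f_n' = f_0' / (1 - p s)^n`. Integrating by parts,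
`∫_0^x f_n = x f_n(x) - ∫_0^x y f_n'(y) dy`, so the left-hand side collapses to
`f_0(0) + ∫_0^x (1 - p y) f_n'(y) dy`; one factor `1 - p y` cancels and what remains is the
integral formula for `f_{n-1}` (for `n = 1`, the fundamental theorem of calculus for `f_0`). -/

open MeasureTheory intervalIntegral

open Set

lemma one_sub_mul_pos_of_mem_Icc {p s : ℝ} (hp1 : p < 1) (hs : s ∈ Icc (0 : ℝ) 1) :
    0 < 1 - p * s := by
  nlinarith [mul_nonneg (sub_nonneg.2 hp1.le) hs.1, hs.2]

lemma hasDerivAt_of_eqOn_primitive {F g : ℝ → ℝ} {a b c y : ℝ}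
    (hg : ContinuousOn g (Icc a b)) (hF : EqOn F (fun y => c + ∫ s in a..y, g s) (Icc a b))
    (hy : y ∈ Ioo a b) : HasDerivAt F (g y) y := by
  have hint : IntervalIntegrable g volume a y :=
    (hg.mono (by rw [uIcc_of_le hy.1.le]; exact Icc_subset_Icc_right hy.2.le)).intervalIntegrable
  have hprim : HasDerivAt (fun y => c + ∫ s in a..y, g s) (g y) y :=
    (integral_hasDerivAt_right hint
      ((hg.mono Ioo_subset_Icc_self).stronglyMeasurableAtFilter isOpen_Ioo y hy)
      (hg.continuousAt (Icc_mem_nhds hy.1 hy.2))).const_add c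
  exact hprim.congr_of_eventuallyEq (Filter.eventuallyEq_of_mem (Icc_mem_nhds hy.1 hy.2) hF)

theorem one_sub_mul_add_integral_of_eqOn_primitive {F g : ℝ → ℝ} {a b c p : ℝ}
    (hab : a ≤ b) (hg : ContinuousOn g (Icc a b))
    (hF : EqOn F (fun y => c + ∫ s in a..y, g s) (Icc a b)) :
    (1 - p * b) * F b + p * ∫ y in a..b, F y
      = (1 - p * a) * c + ∫ y in a..b, (1 - p * y) * g y := by
  have hFcont : ContinuousOn F (Icc a b) := by
    refine (continuousOn_const.add ?_).congr hF
    rw [← uIcc_of_le hab] at hg ⊢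
    exact continuousOn_primitive_interval (hg.integrableOn_compact isCompact_uIcc)
  have hgint : IntervalIntegrable g volume a b :=
    (hg.mono (uIcc_of_le hab).subset).intervalIntegrable
  have hparts : ∫ y in a..b, F y * 1 = F b * b - F a * a - ∫ y in a..b, g y * y := by
    refine integral_mul_deriv_eq_deriv_mul_of_hasDerivAt (by rwa [uIcc_of_le hab])
      continuousOn_id ?_ (fun y _ => hasDerivAt_id y) hgint intervalIntegrable_const
    rw [min_eq_left hab, max_eq_right hab]
    exact fun y hy => hasDerivAt_of_eqOn_primitive hg hF hy
  have hFa : F a = c := by simpa using hF (left_mem_Icc.2 hab)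
  have hFb : F b = c + ∫ s in a..b, g s := hF (right_mem_Icc.2 hab)
  simp only [mul_one] at hparts
  have hsplit :
      ∫ y in a..b, (1 - p * y) * g y = (∫ y in a..b, g y) - p * ∫ y in a..b, g y * y := by
    rw [← intervalIntegral.integral_const_mul, ← integral_sub hgint
      ((hgint.mul_continuousOn (continuousOn_id' _)).const_mul p)]
    exact integral_congr fun y _ => by ring
  rw [hparts, hsplit, hFa, hFb]
  ring

theorem stmt10_general (p : ℝ) (hp1 : p < 1)
    (f0 f0' : ℝ → ℝ)
    (hderiv : ∀ x ∈ Set.Icc (0 : ℝ) 1, HasDerivAt f0 (f0' x) x)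
    (hcont : ContinuousOn f0' (Set.Icc (0 : ℝ) 1))
    (f : ℕ → ℝ → ℝ) (hf0 : f 0 = f0)
    (hfdef : ∀ n : ℕ, 1 ≤ n → ∀ x ∈ Set.Icc (0 : ℝ) 1,
      f n x = f0 0 + ∫ s in (0 : ℝ)..x, f0' s / (1 - p * s) ^ n) :
    ∀ n : ℕ, 1 ≤ n → ∀ x ∈ Set.Icc (0 : ℝ) 1,
      (1 - p * x) * f n x + p * (∫ y in (0 : ℝ)..x, f n y) = f (n - 1) x := by
  have hpos : ∀ s ∈ Icc (0 : ℝ) 1, 0 < 1 - p * s := fun _ => one_sub_mul_pos_of_mem_Icc hp1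
  have hsub : ∀ x ∈ Icc (0 : ℝ) 1, uIcc 0 x ⊆ Icc 0 1 := fun x hx => by
    rw [uIcc_of_le hx.1]; exact Icc_subset_Icc_right hx.2
  have hf : ∀ m : ℕ, ∀ x ∈ Icc (0 : ℝ) 1,
      f m x = f0 0 + ∫ s in (0 : ℝ)..x, f0' s / (1 - p * s) ^ m := by
    rintro (_ | m) x hx
    · simp only [hf0, pow_zero, div_one]
      rw [integral_eq_sub_of_hasDerivAt (fun s hs => hderiv s (hsub x hx hs))
        ((hcont.mono (hsub x hx)).intervalIntegrable)]
      ring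
    · exact hfdef _ m.succ_pos x hx
  rintro (_ | m) hn x hx
  · omega
  have hgcont : ContinuousOn (fun s => f0' s / (1 - p * s) ^ (m + 1)) (Icc 0 x) :=
    (hcont.div ((continuousOn_const.sub (continuousOn_const.mul continuousOn_id)).pow _)
      fun s hs => (pow_pos (hpos s hs) _).ne').mono (Icc_subset_Icc_right hx.2)
  rw [Nat.add_sub_cancel, hf m x hx, one_sub_mul_add_integral_of_eqOn_primitive hx.1 hgcont
    fun y hy => hf (m + 1) y ⟨hy.1, hy.2.trans hx.2⟩, mul_zero, sub_zero, one_mul]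
  congr 1
  refine integral_congr fun s hs => ?_
  have hne := (hpos s (hsub x hx hs)).ne'
  simp only [pow_succ]
  field_simp

theorem stmt10 (p : ℝ) (hp : 0 < p) (hp1 : p < 1)
    (f0 f0' : ℝ → ℝ)
    (hderiv : ∀ x ∈ Set.Icc (0 : ℝ) 1, HasDerivAt f0 (f0' x) x)
    (hcont : ContinuousOn f0' (Set.Icc (0 : ℝ) 1))
    (f : ℕ → ℝ → ℝ) (hf0 : f 0 = f0)
    (hfdef : ∀ n : ℕ, 1 ≤ n → ∀ x ∈ Set.Icc (0 : ℝ) 1,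
      f n x = f0 0 + ∫ s in (0 : ℝ)..x, f0' s / (1 - p * s) ^ n) :
    ∀ n : ℕ, 1 ≤ n → ∀ x ∈ Set.Icc (0 : ℝ) 1,
      (1 - p * x) * f n x + p * (∫ y in (0 : ℝ)..x, f n y) = f (n - 1) x :=
  stmt10_general p hp1 f0 f0' hderiv hcont f hf0 hfdef
end

section
/- Let 0 < p < 1 and let f_n : ℝ → ℝ, n = 0, 1, 2, …, be functions that are continuously differentiable on [0,1] and satisfy, for every n ≥ 1 and every x ∈ [0,1], the equation (1 − p·x)·f_n(x) + p·∫_0^x f_n(y) dy = f_{n−1}(x). Then for every n ≥ 0 and every x ∈ [0,1], f_n(x) = f_0(0) + ∫_0^x f_0'(s) / (1 − p·s)^n ds. -/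
open MeasureTheory intervalIntegral Filter Topology

theorem stmt11 (p : ℝ) (hp : 0 < p) (hp1 : p < 1)
    (f f' : ℕ → ℝ → ℝ)
    (hderiv : ∀ n : ℕ, ∀ x ∈ Set.Icc (0 : ℝ) 1, HasDerivAt (f n) (f' n x) x)
    (hcont : ∀ n : ℕ, ContinuousOn (f' n) (Set.Icc (0 : ℝ) 1))
    (heq : ∀ n : ℕ, 1 ≤ n → ∀ x ∈ Set.Icc (0 : ℝ) 1,
      (1 - p * x) * f n x + p * (∫ y in (0 : ℝ)..x, f n y) = f (n - 1) x) :
    ∀ n : ℕ, ∀ x ∈ Set.Icc (0 : ℝ) 1,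
      f n x = f 0 0 + ∫ s in (0 : ℝ)..x, f' 0 s / (1 - p * s) ^ n := by
  have hfc : ∀ n, ContinuousOn (f n) (Set.Icc (0 : ℝ) 1) := fun n x hx =>
    (hderiv n x hx).continuousAt.continuousWithinAt
  have hpos : ∀ x ∈ Set.Icc (0 : ℝ) 1, (0 : ℝ) < 1 - p * x := by
    intro x hx
    nlinarith [hx.1, hx.2]
  -- The derivative relation: (1 - p x) f'_{n+1} x = f'_n x on [0,1]
  have hdrel : ∀ n : ℕ, ∀ x ∈ Set.Icc (0 : ℝ) 1,
      (1 - p * x) * f' (n + 1) x = f' n x := by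
    intro n x hx
    haveI : Fact (x ∈ Set.Icc (0 : ℝ) 1) := ⟨hx⟩
    have hI : IntervalIntegrable (f (n + 1)) volume 0 x := by
      apply ContinuousOn.intervalIntegrable
      apply (hfc (n + 1)).mono
      rw [Set.uIcc_of_le hx.1]
      exact Set.Icc_subset_Icc le_rfl hx.2
    have hmeas : StronglyMeasurableAtFilter (f (n + 1)) (𝓝[Set.Icc (0:ℝ) 1] x) := by
      exact ⟨Set.Icc (0:ℝ) 1, self_mem_nhdsWithin,
        (hfc (n + 1)).aestronglyMeasurable measurableSet_Icc⟩
    have hF : HasDerivWithinAt (fun u => ∫ y in (0 : ℝ)..u, f (n + 1) y)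
        (f (n + 1) x) (Set.Icc (0 : ℝ) 1) x :=
      integral_hasDerivWithinAt_right hI hmeas (hfc (n + 1) x hx)
    have h1 : HasDerivWithinAt (fun u => (1 - p * u) * f (n + 1) u)
        ((-p) * f (n + 1) x + (1 - p * x) * f' (n + 1) x) (Set.Icc (0 : ℝ) 1) x := by
      have ha : HasDerivWithinAt (fun u : ℝ => 1 - p * u) (-p) (Set.Icc (0 : ℝ) 1) x := by
        simpa using ((hasDerivAt_id x).const_mul p).const_sub 1 |>.hasDerivWithinAt
      exact ha.mul ((hderiv (n + 1) x hx).hasDerivWithinAt)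
    have hg : HasDerivWithinAt
        (fun u => (1 - p * u) * f (n + 1) u + p * ∫ y in (0 : ℝ)..u, f (n + 1) y)
        ((-p) * f (n + 1) x + (1 - p * x) * f' (n + 1) x + p * f (n + 1) x)
        (Set.Icc (0 : ℝ) 1) x := h1.add (hF.const_mul p)
    have hg' : HasDerivWithinAt (f n)
        ((-p) * f (n + 1) x + (1 - p * x) * f' (n + 1) x + p * f (n + 1) x)
        (Set.Icc (0 : ℝ) 1) x := by
      apply hg.congr
      · intro y hy
        have := heq (n + 1) (by omega) y hy
        simpa using this.symm
      · have := heq (n + 1) (by omega) x hx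
        simpa using this.symm
    have hu := uniqueDiffOn_Icc (zero_lt_one) x hx
    have e1 := hg'.derivWithin hu
    have e2 := ((hderiv n x hx).hasDerivWithinAt).derivWithin hu
    have : (-p) * f (n + 1) x + (1 - p * x) * f' (n + 1) x + p * f (n + 1) x = f' n x := by
      rw [← e1, ← e2]
    linarith [this]
  -- f' n x = f' 0 x / (1 - p x)^n
  have hfprime : ∀ n : ℕ, ∀ x ∈ Set.Icc (0 : ℝ) 1,
      f' n x = f' 0 x / (1 - p * x) ^ n := by
    intro n
    induction n with
    | zero => intro x hx; simp
    | succ k ih =>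
      intro x hx
      have hne : (1 - p * x) ≠ 0 := ne_of_gt (hpos x hx)
      have := hdrel k x hx
      rw [ih x hx] at this
      field_simp at this ⊢
      rw [← this]; ring
  -- f n 0 = f 0 0
  have hzero : ∀ n : ℕ, f n 0 = f 0 0 := by
    intro n
    induction n with
    | zero => rfl
    | succ k ih =>
      have := heq (k + 1) (by omega) 0 (by constructor <;> norm_num)
      simp at this
      rw [← ih, ← this]
  intro n x hx
  have hsub : Set.uIcc (0 : ℝ) x ⊆ Set.Icc (0 : ℝ) 1 := by
    rw [Set.uIcc_of_le hx.1]
    exact Set.Icc_subset_Icc le_rfl hx.2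
  have hInt : IntervalIntegrable (f' n) volume 0 x :=
    ((hcont n).mono hsub).intervalIntegrable
  have hFTC : ∫ s in (0 : ℝ)..x, f' n s = f n x - f n 0 :=
    integral_eq_sub_of_hasDerivAt (fun y hy => hderiv n y (hsub hy)) hInt
  have hcongr : ∫ s in (0 : ℝ)..x, f' n s
      = ∫ s in (0 : ℝ)..x, f' 0 s / (1 - p * s) ^ n := by
    apply integral_congr
    intro s hs
    exact hfprime n s (hsub hs)
  rw [← hcongr, hFTC, hzero n]
  ring
end

section
/- Let 0 < p < 1, let (Ω, 𝓕, P) be a probability space, let (X_n)_{n≥0} be a sequence of random variables with X_0 = 1 almost surely and X_n ∈ (0,1] almost surely for all n, let 𝓕_n = σ(X_0, …, X_n), and assume that for every n ≥ 1 and every bounded Borel measurable function g : ℝ → ℝ, E[g(X_n) | 𝓕_{n−1}] = (1 − p·X_{n−1})·g(X_{n−1}) + p·∫_0^{X_{n−1}} g(y) dy almost surely. Let f_0 : ℝ → ℝ be continuously differentiable on [0,1] and define f_n(x) = f_0(0) + ∫_0^x f_0'(s) / (1 − p·s)^n ds for n ≥ 1 and x ∈ [0,1]. Then the sequence (f_n(X_n))_{n≥0}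 is a martingale with respect to the filtration (𝓕_n)_{n≥0}. -/
/-!
By hypothesis `E[g (X (n+1)) | ℱ n] = T g (X n)` for the step operator
`T g x = (1 - p x) g x + p ∫₀ˣ g`, so it suffices that `T (f (n+1)) = f n` on `[0, 1]`.
Both sides equal `f0 0` at `0`, and `(T g)' = (1 - p x) g'` since the terms `∓ p g` cancel;
this turns `f0' / (1 - p x) ^ (n+1)` into `f0' / (1 - p x) ^ n`.
-/

open MeasureTheory intervalIntegral Set

noncomputable def staircaseStep (p : ℝ) (g : ℝ → ℝ) (x : ℝ) : ℝ :=
  (1 - p * x) * g x + p * ∫ y in (0 : ℝ)..x, g y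

theorem staircaseStep_congr {p x : ℝ} {g₁ g₂ : ℝ → ℝ} (hx : 0 ≤ x) (h : EqOn g₁ g₂ (Icc 0 x)) :
    staircaseStep p g₁ x = staircaseStep p g₂ x := by
  rw [staircaseStep, staircaseStep, integral_congr (uIcc_of_le hx ▸ h), h ⟨hx, le_rfl⟩]

theorem measurable_setIntegral_sections {α β : Type*} [MeasurableSpace α] [MeasurableSpace β]
    {ν : Measure β} [SFinite ν] {h : β → ℝ} (hh : Measurable h) {S : Set (α × β)}
    (hS : MeasurableSet S) : Measurable fun x => ∫ y in Prod.mk x ⁻¹' S, h y ∂ν := by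
  have hF : StronglyMeasurable (S.indicator fun q => h q.2) :=
    ((hh.comp measurable_snd).indicator hS).stronglyMeasurable
  convert (hF.integral_prod_right' (ν := ν)).measurable using 2 with x
  rw [← MeasureTheory.integral_indicator (measurable_prodMk_left hS)]
  rfl

theorem measurable_primitive {h : ℝ → ℝ} (hh : Measurable h) (a : ℝ) :
    Measurable fun x => ∫ s in a..x, h s :=
  -- `∫ s in a..x` is by definition `∫ s in Ioc a x - ∫ s in Ioc x a`.
  (measurable_setIntegral_sections hh (S := {q | q.2 ∈ Ioc a q.1}) <|
      measurableSet_lt measurable_const measurable_snd |>.inter <|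
        measurableSet_le measurable_snd measurable_fst).sub
    (measurable_setIntegral_sections hh (S := {q | q.2 ∈ Ioc q.1 a}) <|
      measurableSet_lt measurable_fst measurable_snd |>.inter <|
        measurableSet_le measurable_snd measurable_const)

theorem hasDerivWithinAt_primitive_Icc {g : ℝ → ℝ} {a b x : ℝ} (hg : ContinuousOn g (Icc a b))
    (hx : x ∈ Icc a b) : HasDerivWithinAt (fun y => ∫ s in a..y, g s) (g x) (Icc a b) x := by
  have : Fact (x ∈ Icc a b) := ⟨hx⟩
  exact integral_hasDerivWithinAt_right
    ((hg.mono (Icc_subset_Icc_right hx.2)).intervalIntegrable_of_Icc hx.1)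
    (hg.stronglyMeasurableAtFilter_nhdsWithin measurableSet_Icc x) (hg x hx)

theorem hasDerivWithinAt_staircaseStep {p b x : ℝ} {g g' : ℝ → ℝ}
    (hg : ContinuousOn g (Icc 0 b)) (hx : x ∈ Icc 0 b)
    (hderiv : HasDerivWithinAt g (g' x) (Icc 0 b) x) :
    HasDerivWithinAt (staircaseStep p g) ((1 - p * x) * g' x) (Icc 0 b) x := by
  have hlin : HasDerivWithinAt (fun y => 1 - p * y) (-p) (Icc 0 b) x := by
    simpa using ((hasDerivWithinAt_id x _).const_mul p).const_sub 1
  exact ((hlin.mul hderiv).add ((hasDerivWithinAt_primitive_Icc hg hx).const_mul p)).congr_deriv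
    (by ring)

theorem staircaseStep_eq_of_hasDerivWithinAt {p b : ℝ} {u u' v : ℝ → ℝ}
    (hu : ContinuousOn u (Icc 0 b)) (hv : ContinuousOn v (Icc 0 b))
    (hu' : ∀ x ∈ Icc 0 b, HasDerivWithinAt u (u' x) (Icc 0 b) x)
    (hv' : ∀ x ∈ Icc 0 b, HasDerivWithinAt v ((1 - p * x) * u' x) (Icc 0 b) x)
    (h0 : u 0 = v 0) : ∀ x ∈ Icc 0 b, staircaseStep p u x = v x := by
  have hTu x (hx : x ∈ Icc 0 b) := hasDerivWithinAt_staircaseStep (p := p) hu hx (hu' x hx)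
  refine eq_of_has_deriv_right_eq
    (fun x hx => (hTu x (mem_Icc_of_Ico hx)).mono_of_mem_nhdsWithin (Icc_mem_nhdsGE_of_mem hx))
    (fun x hx => (hv' x (mem_Icc_of_Ico hx)).mono_of_mem_nhdsWithin (Icc_mem_nhdsGE_of_mem hx))
    (fun x hx => (hTu x hx).continuousWithinAt) hv ?_
  simp [staircaseStep, h0]

theorem one_sub_mul_pos_of_mem_Icc_s14 {p x : ℝ} (hp : p < 1) (hx : x ∈ Icc (0 : ℝ) 1) :
    0 < 1 - p * x := by
  rcases le_or_gt 0 p with hp0 | hp0 <;> nlinarith [hx.1, hx.2]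

theorem staircaseStep_succ_eq_of_hasDerivWithinAt {p : ℝ} (hp : p < 1) {φ : ℝ → ℝ}
    {f : ℕ → ℝ → ℝ}
    (hderiv : ∀ n, ∀ x ∈ Icc (0 : ℝ) 1, HasDerivWithinAt (f n) (φ x / (1 - p * x) ^ n) (Icc 0 1) x)
    (hzero : ∀ n, f (n + 1) 0 = f n 0) (n : ℕ) :
    ∀ x ∈ Icc (0 : ℝ) 1, staircaseStep p (f (n + 1)) x = f n x :=
  staircaseStep_eq_of_hasDerivWithinAt
    (fun x hx => (hderiv _ x hx).continuousWithinAt)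
    (fun x hx => (hderiv n x hx).continuousWithinAt) (hderiv _)
    (fun x hx => (hderiv n x hx).congr_deriv <| by
      rw [pow_succ, ← div_div, mul_div_cancel₀ _ (one_sub_mul_pos_of_mem_Icc_s14 hp hx).ne'])
    (hzero n)

theorem martingale_of_staircaseStep_eq {Ω : Type*} [m0 : MeasurableSpace Ω] {P : Measure Ω}
    [IsFiniteMeasure P] {p : ℝ} {X : ℕ → Ω → ℝ} {ℱ : Filtration ℕ m0}
    (hX : ∀ n, Measurable[ℱ n] (X n)) (hXmem : ∀ n, ∀ᵐ ω ∂P, X n ω ∈ Icc (0 : ℝ) 1)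
    (hcond : ∀ n (g : ℝ → ℝ), Measurable g → (∃ C : ℝ, ∀ y, |g y| ≤ C) →
      P[fun ω => g (X (n + 1) ω) | ℱ n] =ᵐ[P] fun ω => staircaseStep p g (X n ω))
    {h : ℕ → ℝ → ℝ} (hmeas : ∀ n, Measurable (h n)) (hcont : ∀ n, ContinuousOn (h n) (Icc 0 1))
    (hstep : ∀ n, ∀ x ∈ Icc (0 : ℝ) 1, staircaseStep p (h (n + 1)) x = h n x) :
    Martingale (fun n ω => h n (X n ω)) ℱ P := by
  have hbound n : ∃ C, 0 ≤ C ∧ ∀ x ∈ Icc (0 : ℝ) 1, |h n x| ≤ C := by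
    obtain ⟨C, hC⟩ := isCompact_Icc.exists_bound_of_continuousOn (hcont n)
    exact ⟨max C 0, le_max_right _ _, fun x hx => (hC x hx).trans (le_max_left _ _)⟩
  have hint n : Integrable (fun ω => h n (X n ω)) P := by
    obtain ⟨C, -, hC⟩ := hbound n
    refine (integrable_const C).mono'
      ((hmeas n).comp ((hX n).mono (ℱ.le n) le_rfl)).aestronglyMeasurable ?_
    filter_upwards [hXmem n] with ω hω using hC _ hω
  refine martingale_nat (fun n => ((hmeas n).comp (hX n)).stronglyMeasurable) hint fun n => ?_
  -- `h (n + 1)` need not be bounded off `[0, 1]`, so feed its truncation to `hcond`.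
  set g := (Icc (0 : ℝ) 1).indicator (h (n + 1))
  have hg : ∃ C : ℝ, ∀ y, |g y| ≤ C := by
    obtain ⟨C, hC0, hC⟩ := hbound (n + 1)
    refine ⟨C, fun y => ?_⟩
    by_cases hy : y ∈ Icc (0 : ℝ) 1
    · simpa [g, hy] using hC y hy
    · simpa [g, hy] using hC0
  have hXg : (fun ω => h (n + 1) (X (n + 1) ω)) =ᵐ[P] fun ω => g (X (n + 1) ω) := by
    filter_upwards [hXmem (n + 1)] with ω hω
    simp [g, hω]
  have hTg : (fun ω => staircaseStep p g (X n ω)) =ᵐ[P] fun ω => h n (X n ω) := by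
    filter_upwards [hXmem n] with ω hω
    rw [staircaseStep_congr hω.1 fun y hy => ?_, hstep n _ hω]
    simp [g, Icc_subset_Icc_right hω.2 hy]
  exact ((condExp_congr_ae hXg).trans ((hcond n g ((hmeas _).indicator measurableSet_Icc) hg).trans
    hTg)).symm

theorem stmt14_general {Ω : Type*} [m0 : MeasurableSpace Ω] (P : Measure Ω) [IsProbabilityMeasure P]
    (p : ℝ) (hp1 : p < 1)
    (X : ℕ → Ω → ℝ)
    (hXmem : ∀ n, ∀ᵐ ω ∂P, X n ω ∈ Set.Ioc (0 : ℝ) 1)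
    (ℱ : Filtration ℕ m0)
    (hℱ : ∀ n, ℱ n = ⨆ i ≤ n, MeasurableSpace.comap (X i) Real.measurableSpace)
    (hcond : ∀ n : ℕ, 1 ≤ n → ∀ g : ℝ → ℝ, Measurable g → (∃ C : ℝ, ∀ y, |g y| ≤ C) →
      P[(fun ω => g (X n ω)) | ℱ (n - 1)] =ᵐ[P]
        fun ω => (1 - p * X (n - 1) ω) * g (X (n - 1) ω)
          + p * ∫ y in (0 : ℝ)..(X (n - 1) ω), g y)
    (f0 f0' : ℝ → ℝ) (hf0meas : Measurable f0) (hf0'meas : Measurable f0')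
    (hderiv : ∀ x ∈ Set.Icc (0 : ℝ) 1, HasDerivAt f0 (f0' x) x)
    (hcont : ContinuousOn f0' (Set.Icc (0 : ℝ) 1))
    (f : ℕ → ℝ → ℝ) (hf0 : f 0 = f0)
    (hfdef : ∀ n : ℕ, 1 ≤ n → ∀ x : ℝ,
      f n x = f0 0 + ∫ s in (0 : ℝ)..x, f0' s / (1 - p * s) ^ n) :
    Martingale (fun n ω => f n (X n ω)) ℱ P := by
  have hderivf n : ∀ x ∈ Icc (0 : ℝ) 1,
      HasDerivWithinAt (f n) (f0' x / (1 - p * x) ^ n) (Icc 0 1) x := by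
    intro x hx
    cases n with
    | zero => simpa [hf0] using (hderiv x hx).hasDerivWithinAt
    | succ n =>
      rw [funext (hfdef _ n.succ_pos)]
      exact (hasDerivWithinAt_primitive_Icc (hcont.div (by fun_prop)
        fun y hy => (pow_pos (one_sub_mul_pos_of_mem_Icc_s14 hp1 hy) _).ne') hx).const_add _
  have hmeasf n : Measurable (f n) := by
    cases n with
    | zero => exact hf0 ▸ hf0meas
    | succ n =>
      rw [funext (hfdef _ n.succ_pos)]
      exact measurable_const.add (measurable_primitive (by fun_prop) 0)
  have hzero n : f (n + 1) 0 = f n 0 := by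
    cases n <;> simp [hf0, hfdef]
  have hX n : Measurable[ℱ n] (X n) := by
    rw [measurable_iff_comap_le, hℱ n]
    exact le_iSup₂ (f := fun i (_ : i ≤ n) => MeasurableSpace.comap (X i) _) n le_rfl
  refine martingale_of_staircaseStep_eq hX (fun n => (hXmem n).mono fun _ => mem_Icc_of_Ioc)
    (fun n g hg hgb => ?_) hmeasf (fun n x hx => (hderivf n x hx).continuousWithinAt)
    (staircaseStep_succ_eq_of_hasDerivWithinAt hp1 hderivf hzero)
  have h := hcond (n + 1) n.succ_pos g hg hgb
  simp only [Nat.add_sub_cancel] at h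
  exact h

theorem stmt14 {Ω : Type*} [m0 : MeasurableSpace Ω] (P : Measure Ω) [IsProbabilityMeasure P]
    (p : ℝ) (hp : 0 < p) (hp1 : p < 1)
    (X : ℕ → Ω → ℝ) (hXmeas : ∀ n, Measurable (X n))
    (hX0 : ∀ᵐ ω ∂P, X 0 ω = 1)
    (hXmem : ∀ n, ∀ᵐ ω ∂P, X n ω ∈ Set.Ioc (0 : ℝ) 1)
    (ℱ : Filtration ℕ m0)
    (hℱ : ∀ n, ℱ n = ⨆ i ≤ n, MeasurableSpace.comap (X i) Real.measurableSpace)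
    (hcond : ∀ n : ℕ, 1 ≤ n → ∀ g : ℝ → ℝ, Measurable g → (∃ C : ℝ, ∀ y, |g y| ≤ C) →
      P[(fun ω => g (X n ω)) | ℱ (n - 1)] =ᵐ[P]
        fun ω => (1 - p * X (n - 1) ω) * g (X (n - 1) ω)
          + p * ∫ y in (0 : ℝ)..(X (n - 1) ω), g y)
    (f0 f0' : ℝ → ℝ) (hf0meas : Measurable f0) (hf0'meas : Measurable f0')
    (hderiv : ∀ x ∈ Set.Icc (0 : ℝ) 1, HasDerivAt f0 (f0' x) x)
    (hcont : ContinuousOn f0' (Set.Icc (0 : ℝ) 1))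
    (f : ℕ → ℝ → ℝ) (hf0 : f 0 = f0)
    (hfdef : ∀ n : ℕ, 1 ≤ n → ∀ x : ℝ,
      f n x = f0 0 + ∫ s in (0 : ℝ)..x, f0' s / (1 - p * s) ^ n) :
    Martingale (fun n ω => f n (X n ω)) ℱ P :=
  stmt14_general (m0 := m0) P p hp1 X hXmem ℱ hℱ hcond f0 f0' hf0meas hf0'meas hderiv hcont f hf0
    hfdef
end
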